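/- arXiv:2112.08731 — 8 statements merged into one kernel-verified Lean document; each statement's English description precedes it below -/
import Mathlib

section
/- Let K ≥ 1 and d ≥ 0 be integers, let α ∈ (0,1] and D > 0. Then there exists a constant M > 0 (depending only on K, d, α, D) such that for every integer n ≥ 4K(d+1)/α and every real polynomial P of degree at most d, if the number of integers t ∈ {1,…,n} satisfying |P(t)| ≤ D is at least nα/K, then sup_{s ∈ [0,n]} |P(s)| ≤ M. -/
set_option maxHeartbeats 1000000

open Polynomial Finset

private lemma gap_lemma {m : ℕ} (f : Fin m → ℕ) (hf : StrictMono f) :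
    ∀ k : ℕ, ∀ a b : Fin m, a.val + k = b.val → f a + k ≤ f b := by
  intro k
  induction k with
  | zero =>
    intro a b h
    have : a = b := Fin.ext (by omega)
    simp [this]
  | succ k ih =>
    intro a b h
    have hc : a.val + k < m := by omega
    have h1 := ih a ⟨a.val + k, hc⟩ rfl
    have h2 : f ⟨a.val + k, hc⟩ < f b := hf (by simp [Fin.lt_def]; omega)
    omega

/-- Let `K ≥ 1` and `d ≥ 0` be integers, `α ∈ (0,1]`, `D > 0`. There exists
`M > 0` (depending only on `K, d, α, D`) such that for every integer `n ≥ 4K(d+1)/α` and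
every real polynomial `P` of degree at most `d`, if the number of integers `t ∈ {1,…,n}`
with `|P(t)| ≤ D` is at least `nα/K`, then `sup_{s ∈ [0,n]} |P(s)| ≤ M`. -/
theorem stmt0 (K d : ℕ) (hK : 1 ≤ K) (α D : ℝ) (hα : α ∈ Set.Ioc (0:ℝ) 1) (hD : 0 < D) :
    ∃ M > (0:ℝ), ∀ n : ℕ, (4 * K * (d + 1) / α : ℝ) ≤ (n : ℝ) →
      ∀ P : Polynomial ℝ, P.natDegree ≤ d →
        ((n : ℝ) * α / K ≤ ({t : ℕ | 1 ≤ t ∧ t ≤ n ∧ |P.eval (t : ℝ)| ≤ D}).ncard) →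
          ∀ s ∈ Set.Icc (0:ℝ) (n : ℝ), |P.eval s| ≤ M := by
  classical
  obtain ⟨hα0, hα1⟩ := hα
  have hK0 : (0:ℝ) < K := by exact_mod_cast hK
  set B : ℝ := 4 * K * (d + 1) / α with hBdef
  have hB0 : 0 < B := by positivity
  refine ⟨(d+1 : ℝ) * (D * B ^ d), by positivity, ?_⟩
  intro n hn P hdeg hcard s hs
  -- the finset of good points
  set S : Finset ℕ := (Finset.Icc 1 n).filter (fun t => |P.eval (t:ℝ)| ≤ D) with hSdef
  have hset : {t : ℕ | 1 ≤ t ∧ t ≤ n ∧ |P.eval (t : ℝ)| ≤ D} = (S : Set ℕ) := by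
    ext t; simp [hSdef, Finset.mem_filter, Finset.mem_Icc, and_assoc]
  rw [hset, Set.ncard_coe_finset] at hcard
  set m : ℕ := S.card with hmdef
  have hm : (n : ℝ) * α / K ≤ m := hcard
  have hnα : 4 * K * (d + 1) ≤ (n:ℝ) * α := by
    rw [div_le_iff₀ hα0] at hn; nlinarith
  have hm4R : (4 * (d + 1) : ℝ) ≤ m := by
    rw [div_le_iff₀ hK0] at hm
    nlinarith
  have hm4 : 4 * (d + 1) ≤ m := by exact_mod_cast hm4R
  -- the spacing
  set q : ℕ := if d = 0 then 1 else (m - 1) / d with hqdef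
  have hq1 : 1 ≤ q := by
    rcases Nat.eq_zero_or_pos d with h | h
    · simp [hqdef, h]
    · have : d ≤ m - 1 := by omega
      simp only [hqdef, if_neg (Nat.pos_iff_ne_zero.mp h)]
      exact Nat.one_le_div_iff h |>.mpr this
  have hdq : d * q + 1 ≤ m := by
    rcases Nat.eq_zero_or_pos d with h | h
    · simp [h]; omega
    · simp only [hqdef, if_neg (Nat.pos_iff_ne_zero.mp h)]
      have := Nat.mul_div_le (m - 1) d
      have h2 := Nat.div_mul_le_self (m - 1) d
      have : d * ((m-1)/d) ≤ m - 1 := by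
        rw [mul_comm]; exact Nat.div_mul_le_self _ _
      omega
  have hnBq : 1 ≤ d → (n : ℝ) ≤ B * q := by
    intro hd1
    have hd0 : d ≠ 0 := by omega
    have hup : m ≤ (q + 1) * d := by
      simp only [hqdef, if_neg hd0]
      have h1 := Nat.div_add_mod (m-1) d
      have h2 := Nat.mod_lt (m-1) (Nat.pos_of_ne_zero hd0)
      have h3 : ((m-1)/d + 1) * d = d * ((m-1)/d) + d := by ring
      omega
    have hup2 : m ≤ 2 * q * d := by
      calc m ≤ (q + 1) * d := hup
        _ ≤ (q + q) * d := by
            apply Nat.mul_le_mul_right; omega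
        _ = 2 * q * d := by ring
    have hup2R : (m : ℝ) ≤ 2 * q * d := by exact_mod_cast hup2
    have hmK : (n:ℝ) * α ≤ K * m := by
      rw [div_le_iff₀ hK0] at hm; linarith
    have hq0R : (0:ℝ) < q := by exact_mod_cast hq1
    rw [hBdef]
    rw [div_mul_eq_mul_div, le_div_iff₀ hα0]
    have hd1R : (1:ℝ) ≤ d := by exact_mod_cast hd1
    nlinarith [hq0R, hα0, hK0]
  -- select the nodes
  have hlt : ∀ i : Fin (d+1), i.val * q < m := by
    intro i
    have : i.val ≤ d := by omega
    have : i.val * q ≤ d * q := Nat.mul_le_mul_right _ this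
    omega
  set e := S.orderEmbOfFin (rfl : S.card = m) with hedef
  set t : Fin (d+1) → ℕ := fun i => e ⟨i.val * q, hlt i⟩ with htdef
  have ht_mem : ∀ i, t i ∈ S := fun i => Finset.orderEmbOfFin_mem S rfl _
  have ht_prop : ∀ i, 1 ≤ t i ∧ t i ≤ n ∧ |P.eval ((t i : ℕ) : ℝ)| ≤ D := by
    intro i
    have := ht_mem i
    simp only [hSdef, Finset.mem_filter, Finset.mem_Icc] at this
    exact ⟨this.1.1, this.1.2, this.2⟩
  -- gaps
  have hgap : ∀ i j : Fin (d+1), j < i → t j + q ≤ t i := by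
    intro i j hij
    have hk : (j.val * q) + (i.val - j.val) * q = i.val * q := by
      have : j.val ≤ i.val := le_of_lt hij
      have := Nat.sub_add_cancel this
      nlinarith [Nat.sub_add_cancel (le_of_lt hij)]
    have := gap_lemma (⇑e) e.strictMono ((i.val - j.val) * q)
      ⟨j.val * q, hlt j⟩ ⟨i.val * q, hlt i⟩ hk
    have hgeq : q ≤ (i.val - j.val) * q := by
      have : 1 ≤ i.val - j.val := by omega
      nlinarith
    simp only [htdef]
    omega
  have hgapR : ∀ i j : Fin (d+1), i ≠ j → (q : ℝ) ≤ |((t i : ℕ) : ℝ) - ((t j : ℕ) : ℝ)| := by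
    intro i j hij
    rcases lt_or_gt_of_ne hij with h | h
    · have := hgap j i h
      rw [abs_sub_comm]
      rw [le_abs]
      left
      have : (t i : ℝ) + q ≤ t j := by exact_mod_cast this
      linarith
    · have := hgap i j h
      rw [le_abs]
      left
      have : (t j : ℝ) + q ≤ t i := by exact_mod_cast this
      linarith
  set v : Fin (d+1) → ℝ := fun i => ((t i : ℕ) : ℝ) with hvdef
  have hv : Set.InjOn v (Finset.univ : Finset (Fin (d+1))) := by
    intro i _ j _ h
    by_contra hij
    have := hgapR i j hij
    rw [hvdef] at h
    simp only at h
    rw [h, sub_self, abs_zero] at this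
    have : (1:ℝ) ≤ q := by exact_mod_cast hq1
    linarith
  have hdeg' : P.degree < ((Finset.univ : Finset (Fin (d+1))).card : ℕ) := by
    rw [Finset.card_univ, Fintype.card_fin]
    refine lt_of_le_of_lt Polynomial.degree_le_natDegree ?_
    exact_mod_cast Nat.lt_succ_of_le hdeg
  have hPi := Lagrange.eq_interpolate hv hdeg'
  -- bound each basis polynomial
  have hq0R : (0:ℝ) < q := by exact_mod_cast hq1
  obtain ⟨hs0, hsn⟩ := hs
  have hfactor : ∀ i j : Fin (d+1), j ≠ i →
      |Polynomial.eval s (Lagrange.basisDivisor (v i) (v j))| ≤ B := by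
    intro i j hji
    have hd1 : 1 ≤ d := by
      by_contra h
      have : d = 0 := by omega
      subst this
      exact hji (Fin.ext (by omega))
    have hnB := hnBq hd1
    have hvj1 : (1:ℝ) ≤ v j := by
      simp only [hvdef]; exact_mod_cast (ht_prop j).1
    have hvjn : v j ≤ n := by
      simp only [hvdef]; exact_mod_cast (ht_prop j).2.1
    have habs : |s - v j| ≤ n := by
      rw [abs_le]; constructor <;> linarith
    have hgap := hgapR i j (Ne.symm hji)
    rw [Lagrange.basisDivisor]
    rw [Polynomial.eval_mul, Polynomial.eval_C, Polynomial.eval_sub, Polynomial.eval_X,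
      Polynomial.eval_C]
    rw [abs_mul, abs_inv]
    have hvij : (0:ℝ) < |v i - v j| := lt_of_lt_of_le hq0R hgap
    rw [inv_mul_le_iff₀ hvij]
    calc |s - v j| ≤ (n:ℝ) := habs
      _ ≤ B * q := hnB
      _ = (q:ℝ) * B := mul_comm _ _
      _ ≤ |v i - v j| * B :=
          mul_le_mul_of_nonneg_right (by simpa [hvdef] using hgap) (le_of_lt hB0)
  have hbasis : ∀ i : Fin (d+1),
      |Polynomial.eval s (Lagrange.basis Finset.univ v i)| ≤ B ^ d := by
    intro i
    rw [Lagrange.basis, Polynomial.eval_prod, Finset.abs_prod]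
    have hcard_erase : ((Finset.univ : Finset (Fin (d+1))).erase i).card = d := by
      rw [Finset.card_erase_of_mem (Finset.mem_univ i), Finset.card_univ, Fintype.card_fin]
      omega
    calc ∏ j ∈ Finset.univ.erase i, |Polynomial.eval s (Lagrange.basisDivisor (v i) (v j))|
        ≤ ∏ j ∈ Finset.univ.erase i, B := by
          apply Finset.prod_le_prod
          · intro j _; exact abs_nonneg _
          · intro j hj
            exact hfactor i j (Finset.mem_erase.mp hj).1
      _ = B ^ d := by rw [Finset.prod_const, hcard_erase]
  -- put it together
  conv_lhs => rw [hPi]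
  rw [Lagrange.interpolate_apply, Polynomial.eval_finset_sum]
  calc |∑ i : Fin (d+1), Polynomial.eval s (Polynomial.C (P.eval (v i)) * Lagrange.basis Finset.univ v i)|
      ≤ ∑ i : Fin (d+1), |Polynomial.eval s (Polynomial.C (P.eval (v i)) * Lagrange.basis Finset.univ v i)| :=
        Finset.abs_sum_le_sum_abs _ _
    _ ≤ ∑ i : Fin (d+1), D * B ^ d := by
        apply Finset.sum_le_sum
        intro i _
        rw [Polynomial.eval_mul, Polynomial.eval_C, abs_mul]
        have h1 : |P.eval (v i)| ≤ D := (ht_prop i).2.2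
        have h2 := hbasis i
        have := abs_nonneg (P.eval (v i))
        have := abs_nonneg (Polynomial.eval s (Lagrange.basis Finset.univ v i))
        nlinarith
    _ = (d+1 : ℝ) * (D * B ^ d) := by
        rw [Finset.sum_const, Finset.card_univ, Fintype.card_fin]
        push_cast; ring
end

section
/- Let K ≥ 1 and d ≥ 0 be integers, let ε ∈ (0,1] and D > 0. For every integer n ≥ 4K(d+1)/ε and every real polynomial P of degree at most d such that the cardinality of {t ∈ {1,…,n} : |P(t)| ≤ D} is at least nε, there exist points u₁,…,u_{d+1} ∈ [0,1] such that |u_i − u_j| ≥ ε/(4K(d+1)) for all i ≠ j, and |P(n·u_i)| ≤ D for every i ∈ {1,…,d+1}. -/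
lemma stmt2_aux {N : ℕ} (f : Fin N → ℕ) (hf : StrictMono f) :
    ∀ k (a b : Fin N), a.val + k = b.val → f a + k ≤ f b := by
  intro k
  induction k with
  | zero =>
    intro a b h
    have : a = b := Fin.ext (by omega)
    subst this; omega
  | succ k ih =>
    intro a b h
    have hb' : a.val + k < N := by omega
    have h1 := ih a ⟨a.val + k, hb'⟩ rfl
    have h2 : f ⟨a.val + k, hb'⟩ < f b := hf (by simp [Fin.lt_def]; omega)
    omega

/-- Let `K ≥ 1`, `d ≥ 0`, `ε ∈ (0,1]`, `D > 0`. For every integer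
`n ≥ 4K(d+1)/ε` and every real polynomial `P` of degree at most `d` such that
`#{t ∈ {1,…,n} : |P(t)| ≤ D} ≥ nε`, there exist points `u₁,…,u_{d+1} ∈ [0,1]` with
`|u_i − u_j| ≥ ε/(4K(d+1))` for `i ≠ j` and `|P(n·u_i)| ≤ D` for every `i`. -/
theorem stmt2 (K d : ℕ) (hK : 1 ≤ K) (ε D : ℝ) (hε : ε ∈ Set.Ioc (0:ℝ) 1) (hD : 0 < D)
    (n : ℕ) (hn : (4 * K * (d + 1) / ε : ℝ) ≤ (n : ℝ))
    (P : Polynomial ℝ) (hdeg : P.natDegree ≤ d)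
    (hcard : (n : ℝ) * ε ≤ ({t : ℕ | 1 ≤ t ∧ t ≤ n ∧ |P.eval (t : ℝ)| ≤ D}).ncard) :
    ∃ u : Fin (d + 1) → ℝ, (∀ i, u i ∈ Set.Icc (0:ℝ) 1) ∧
      (∀ i j, i ≠ j → ε / (4 * K * (d + 1)) ≤ |u i - u j|) ∧
      ∀ i, |P.eval ((n : ℝ) * u i)| ≤ D := by
  obtain ⟨hε0, hε1⟩ := hε
  set A : ℝ := 4 * K * (d + 1) with hA_def
  have hK1 : (1:ℝ) ≤ (K:ℝ) := by exact_mod_cast hK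
  have hA4 : (4:ℝ) ≤ A := by
    have : (1:ℝ) ≤ (d:ℝ) + 1 := by
      have := Nat.cast_nonneg (α := ℝ) d
      linarith
    nlinarith
  have hA0 : (0:ℝ) < A := by linarith
  -- n ε ≥ A
  have hnε : A ≤ (n:ℝ) * ε := by
    rw [div_le_iff₀ hε0] at hn
    linarith
  have hn0 : (0:ℝ) < (n:ℝ) := by
    have : (0:ℝ) < A / ε := by positivity
    linarith
  -- the finite set
  set T : Finset ℕ := (Finset.Icc 1 n).filter (fun t => |P.eval (t:ℝ)| ≤ D) with hT_def
  have hTset : {t : ℕ | 1 ≤ t ∧ t ≤ n ∧ |P.eval (t : ℝ)| ≤ D} = ↑T := by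
    ext t
    simp [hT_def, Finset.mem_filter, Finset.mem_Icc, and_assoc]
  rw [hTset, Set.ncard_coe_finset] at hcard
  set g : ℝ := (n:ℝ) * ε / A with hg_def
  have hg1 : (1:ℝ) ≤ g := by
    rw [le_div_iff₀ hA0]; linarith
  set c : ℕ := ⌈g⌉₊ with hc_def
  have hgc : g ≤ (c:ℝ) := Nat.le_ceil g
  have hcg : (c:ℝ) < g + 1 := Nat.ceil_lt_add_one (by linarith)
  have hdc : d * c + 1 ≤ T.card := by
    have hdg : (d:ℝ) * (c:ℝ) + 1 ≤ (n:ℝ) * ε := by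
      have h1 : (d:ℝ) * (c:ℝ) ≤ d * (g + 1) := by
        have : (0:ℝ) ≤ (d:ℝ) := Nat.cast_nonneg d
        nlinarith
      have h2 : (n:ℝ) * ε = A * g := by
        rw [hg_def]; field_simp
      have h3 : (d:ℝ) * (g + 1) + 1 ≤ A * g := by nlinarith
      linarith
    have : ((d * c + 1 : ℕ) : ℝ) ≤ (T.card : ℝ) := by
      push_cast; linarith
    exact_mod_cast this
  -- enumeration
  set f := T.orderIsoOfFin rfl with hf_def
  have hF : StrictMono (fun m : Fin T.card => ((f m : ℕ))) := by
    intro a b hab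
    exact Subtype.coe_lt_coe.mpr (f.strictMono hab)
  have hidx : ∀ i : Fin (d + 1), i.val * c < T.card := by
    intro i
    have : i.val * c ≤ d * c := Nat.mul_le_mul_right c (by omega)
    omega
  set t : Fin (d + 1) → ℕ := fun i => (f ⟨i.val * c, hidx i⟩ : ℕ) with ht_def
  have htT : ∀ i, t i ∈ T := fun i => (f ⟨i.val * c, hidx i⟩).2
  have ht1 : ∀ i, 1 ≤ t i ∧ t i ≤ n := by
    intro i
    have := htT i
    rw [hT_def, Finset.mem_filter, Finset.mem_Icc] at this
    exact ⟨this.1.1, this.1.2⟩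
  have htD : ∀ i, |P.eval ((t i : ℝ))| ≤ D := by
    intro i
    have := htT i
    rw [hT_def, Finset.mem_filter] at this
    exact this.2
  -- separation of t's
  have hsep : ∀ i j : Fin (d + 1), i < j → t i + c ≤ t j := by
    intro i j hij
    have hk : i.val * c + (j.val - i.val) * c = j.val * c := by
      have : i.val ≤ j.val := le_of_lt hij
      rw [← Nat.add_mul]; congr 1; omega
    have := stmt2_aux _ hF ((j.val - i.val) * c) ⟨i.val * c, hidx i⟩ ⟨j.val * c, hidx j⟩ hk
    have hji : 1 ≤ j.val - i.val := by
      have : i.val < j.val := hij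
      omega
    have : c ≤ (j.val - i.val) * c := Nat.le_mul_of_pos_left c (by omega)
    simp only [ht_def]
    omega
  refine ⟨fun i => (t i : ℝ) / n, ?_, ?_, ?_⟩
  · intro i
    obtain ⟨h1, h2⟩ := ht1 i
    constructor
    · positivity
    · rw [div_le_one hn0]; exact_mod_cast h2
  · intro i j hij
    have key : ∀ i j : Fin (d+1), i < j → ε / A ≤ |(t i : ℝ)/n - (t j : ℝ)/n| := by
      intro i j hlt
      have h := hsep i j hlt
      have h' : (t i : ℝ) + c ≤ (t j : ℝ) := by exact_mod_cast h
      have hle : (t i : ℝ)/n ≤ (t j : ℝ)/n := by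
        apply (div_le_div_iff_of_pos_right hn0).mpr
        linarith [hgc, hg1]
      rw [abs_sub_comm, abs_of_nonneg (sub_nonneg.mpr hle)]
      have hgn : ε / A = g / n := by
        rw [hg_def]
        field_simp
      rw [hgn, ← sub_div]
      apply (div_le_div_iff_of_pos_right hn0).mpr
      linarith [hgc]
    rcases lt_trichotomy i j with h | h | h
    · exact key i j h
    · exact absurd h hij
    · rw [abs_sub_comm]; exact key j i h
  · intro i
    have : (n:ℝ) * ((t i : ℝ) / n) = (t i : ℝ) := by
      field_simp
    rw [this]; exact htD i
end

section
/- Let d ≥ 0 be an integer, let P be a real polynomial of degree at most d, and let D > 0. Then the set {t ∈ ℝ : |P(t)| > D} has at most d+1 connected components. -/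
open Set Polynomial

/-- A bounded connected component of the open superlevel set contains a critical point. -/
lemma stmt4_crit (P : Polynomial ℝ) (D : ℝ) (hD : 0 < D)
    (hS : IsOpen {s : ℝ | D < |P.eval s|}) (t : ℝ) (ht : t ∈ {s : ℝ | D < |P.eval s|})
    (hA : BddAbove (connectedComponentIn {s : ℝ | D < |P.eval s|} t))
    (hB : BddBelow (connectedComponentIn {s : ℝ | D < |P.eval s|} t)) :
    ∃ z ∈ connectedComponentIn {s : ℝ | D < |P.eval s|} t, P.derivative.eval z = 0 := by
  set S : Set ℝ := {s : ℝ | D < |P.eval s|} with hSdef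
  set C := connectedComponentIn S t with hCdef
  have htC : t ∈ C := mem_connectedComponentIn ht
  have hCne : C.Nonempty := ⟨t, htC⟩
  have hCsub : C ⊆ S := connectedComponentIn_subset S t
  have hCopen : IsOpen C := hS.connectedComponentIn
  have hCconn : IsConnected C := isConnected_connectedComponentIn_iff.mpr ht
  have hord : C.OrdConnected := hCconn.isPreconnected.ordConnected
  set a := sInf C with ha
  set b := sSup C with hb
  -- an interval around t inside C
  obtain ⟨ε, hε, hball⟩ := Metric.isOpen_iff.mp hCopen t htC
  have htl : t - ε / 2 ∈ C := hball (by
    rw [Metric.mem_ball, Real.dist_eq, show t - ε / 2 - t = -(ε / 2) by ring, abs_neg,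
      abs_of_pos (by linarith)]; linarith)
  have htr : t + ε / 2 ∈ C := hball (by
    rw [Metric.mem_ball, Real.dist_eq, show t + ε / 2 - t = ε / 2 by ring,
      abs_of_pos (by linarith)]; linarith)
  have hab : a < b := by
    have h1 : a ≤ t - ε / 2 := csInf_le hB htl
    have h2 : t + ε / 2 ≤ b := le_csSup hA htr
    linarith
  have hIoo : Ioo a b ⊆ C := by
    intro z hz
    obtain ⟨x, hx, hxz⟩ := exists_lt_of_csInf_lt hCne hz.1
    obtain ⟨y, hy, hzy⟩ := exists_lt_of_lt_csSup hCne hz.2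
    exact hord.out hx hy ⟨hxz.le, hzy.le⟩
  have hCIcc : C ⊆ Icc a b := fun x hx => ⟨csInf_le hB hx, le_csSup hA hx⟩
  -- endpoints are not in S
  have hnotS : ∀ c : ℝ, c ∈ closure C → c ∉ C → c ∉ S := by
    intro c hcl hcC hcS
    have hUopen : IsOpen (connectedComponentIn S c) := hS.connectedComponentIn
    have hcU : c ∈ connectedComponentIn S c := mem_connectedComponentIn hcS
    obtain ⟨u, huU, huC⟩ := mem_closure_iff.mp hcl _ hUopen hcU
    have h1 : connectedComponentIn S c = connectedComponentIn S u := connectedComponentIn_eq huU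
    have h2 : C = connectedComponentIn S u := connectedComponentIn_eq huC
    exact hcC (h2 ▸ h1 ▸ hcU)
  have haC : a ∉ C := by
    intro haC
    obtain ⟨δ, hδ, hballa⟩ := Metric.isOpen_iff.mp hCopen a haC
    have : a - δ / 2 ∈ C := hballa (by
      rw [Metric.mem_ball, Real.dist_eq, show a - δ / 2 - a = -(δ / 2) by ring, abs_neg,
        abs_of_pos (by linarith)]; linarith)
    have := csInf_le hB this
    linarith
  have hbC : b ∉ C := by
    intro hbC
    obtain ⟨δ, hδ, hballb⟩ := Metric.isOpen_iff.mp hCopen b hbC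
    have : b + δ / 2 ∈ C := hballb (by
      rw [Metric.mem_ball, Real.dist_eq, show b + δ / 2 - b = δ / 2 by ring,
        abs_of_pos (by linarith)]; linarith)
    have := le_csSup hA this
    linarith
  have haS : a ∉ S := hnotS a (csInf_mem_closure hCne hB) haC
  have hbS : b ∉ S := hnotS b (csSup_mem_closure hCne hA) hbC
  have haD : |P.eval a| ≤ D := not_lt.mp haS
  have hbD : |P.eval b| ≤ D := not_lt.mp hbS
  have hcont : ContinuousOn (fun x => P.eval x) (Icc a b) := P.continuous_aeval.continuousOn
  have hcomp : IsCompact (Icc a b) := isCompact_Icc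
  have htab : t ∈ Icc a b := hCIcc htC
  have ht' : D < |P.eval t| := ht
  rcases lt_abs.mp ht' with hpos | hneg
  · -- P.eval t > D : take max
    obtain ⟨z, hzI, hzmax⟩ := hcomp.exists_isMaxOn ⟨t, htab⟩ hcont
    have hzt : P.eval t ≤ P.eval z := hzmax htab
    have hzD : D < P.eval z := lt_of_lt_of_le hpos hzt
    have hza : z ≠ a := by
      intro h; rw [h] at hzD
      have := (abs_le.mp haD).2; linarith
    have hzb : z ≠ b := by
      intro h; rw [h] at hzD
      have := (abs_le.mp hbD).2; linarith
    have hzIoo : z ∈ Ioo a b := ⟨lt_of_le_of_ne hzI.1 (Ne.symm hza), lt_of_le_of_ne hzI.2 hzb⟩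
    refine ⟨z, hIoo hzIoo, ?_⟩
    have hlm : IsLocalMax (fun x => P.eval x) z :=
      hzmax.isLocalMax (Icc_mem_nhds hzIoo.1 hzIoo.2)
    have := hlm.deriv_eq_zero
    rwa [Polynomial.deriv] at this
  · -- P.eval t < -D : take min
    obtain ⟨z, hzI, hzmin⟩ := hcomp.exists_isMinOn ⟨t, htab⟩ hcont
    have hzt : P.eval z ≤ P.eval t := hzmin htab
    have hzD : P.eval z < -D := lt_of_le_of_lt hzt (by linarith)
    have hza : z ≠ a := by
      intro h; rw [h] at hzD
      have := (abs_le.mp haD).1; linarith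
    have hzb : z ≠ b := by
      intro h; rw [h] at hzD
      have := (abs_le.mp hbD).1; linarith
    have hzIoo : z ∈ Ioo a b := ⟨lt_of_le_of_ne hzI.1 (Ne.symm hza), lt_of_le_of_ne hzI.2 hzb⟩
    refine ⟨z, hIoo hzIoo, ?_⟩
    have hlm : IsLocalMin (fun x => P.eval x) z :=
      hzmin.isLocalMin (Icc_mem_nhds hzIoo.1 hzIoo.2)
    have := hlm.deriv_eq_zero
    rwa [Polynomial.deriv] at this

/-- Let `d ≥ 0`, `P` a real polynomial of degree at most `d`, `D > 0`.
Then `{t ∈ ℝ : |P(t)| > D}` has at most `d+1` connected components: the collection of its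
connected components (for the subspace topology) is finite of cardinality at most `d+1`. -/
theorem stmt4 (d : ℕ) (P : Polynomial ℝ) (hdeg : P.natDegree ≤ d) (D : ℝ) (hD : 0 < D) :
    ((fun t => connectedComponentIn {s : ℝ | D < |P.eval s|} t) ''
        {s : ℝ | D < |P.eval s|}).Finite ∧
    ((fun t => connectedComponentIn {s : ℝ | D < |P.eval s|} t) ''
        {s : ℝ | D < |P.eval s|}).ncard ≤ d + 1 := by
  set S : Set ℝ := {s : ℝ | D < |P.eval s|} with hSdef
  have hS : IsOpen S := by
    have : S = (fun s : ℝ => |P.eval s|) ⁻¹' Ioi D := rfl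
    rw [this]
    exact (P.continuous_aeval.abs).isOpen_preimage _ isOpen_Ioi
  set 𝒞 := (fun t => connectedComponentIn S t) '' S with h𝒞
  -- components with nonempty intersection are equal
  have heq : ∀ C₁ ∈ 𝒞, ∀ C₂ ∈ 𝒞, (C₁ ∩ C₂).Nonempty → C₁ = C₂ := by
    rintro _ ⟨t₁, ht₁, rfl⟩ _ ⟨t₂, ht₂, rfl⟩ ⟨u, hu₁, hu₂⟩
    show connectedComponentIn S t₁ = connectedComponentIn S t₂
    rw [connectedComponentIn_eq hu₁, connectedComponentIn_eq hu₂]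
  by_cases hder : P.derivative = 0
  · -- P constant
    have h0 : P.natDegree = 0 := natDegree_eq_zero_of_derivative_eq_zero hder
    obtain ⟨c, hc⟩ := natDegree_eq_zero.mp h0
    have hSc : S = ∅ ∨ S = univ := by
      by_cases hcb : D < |c|
      · right; ext s; simp [hSdef, ← hc]; exact hcb
      · left; ext s; simp [hSdef, ← hc]; exact not_lt.mp hcb
    have hsub : 𝒞.Subsingleton := by
      rcases hSc with h | h
      · rw [h𝒞, h]; simp
      · rintro _ ⟨t₁, ht₁, rfl⟩ _ ⟨t₂, ht₂, rfl⟩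
        show connectedComponentIn S t₁ = connectedComponentIn S t₂
        rw [h, connectedComponentIn_univ, connectedComponentIn_univ,
          PreconnectedSpace.connectedComponent_eq_univ,
          PreconnectedSpace.connectedComponent_eq_univ]
    exact ⟨hsub.finite, le_trans ((Set.ncard_le_one hsub.finite).mpr hsub) (by omega)⟩
  · -- derivative nonzero
    have hd1 : P.natDegree ≠ 0 := by
      intro h
      obtain ⟨c, hc⟩ := natDegree_eq_zero.mp h
      rw [← hc] at hder
      simp at hder
    have hdge : 1 ≤ d := le_trans (Nat.one_le_iff_ne_zero.mpr hd1) hdeg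
    have hderdeg : P.derivative.natDegree ≤ d - 1 := by
      have := natDegree_derivative_lt (p := P) hd1
      omega
    set R : Set ℝ := {x | P.derivative.IsRoot x} with hR
    have hRfin : R.Finite := P.derivative.finite_setOf_isRoot hder
    have hRcard : R.ncard ≤ d - 1 := by
      have h1 : R ⊆ ↑P.derivative.roots.toFinset := by
        intro x hx
        simp only [Finset.mem_coe, Multiset.mem_toFinset]
        exact (mem_roots hder).mpr hx
      calc R.ncard ≤ (↑P.derivative.roots.toFinset : Set ℝ).ncard :=
            Set.ncard_le_ncard h1 (P.derivative.roots.toFinset.finite_toSet)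
        _ = P.derivative.roots.toFinset.card := Set.ncard_coe_finset _
        _ ≤ Multiset.card P.derivative.roots := P.derivative.roots.toFinset_card_le
        _ ≤ P.derivative.natDegree := P.derivative.card_roots'
        _ ≤ d - 1 := hderdeg
    -- split 𝒞
    set A := {C ∈ 𝒞 | BddAbove C ∧ BddBelow C} with hA
    set B₁ := {C ∈ 𝒞 | ¬ BddAbove C} with hB₁
    set B₂ := {C ∈ 𝒞 | ¬ BddBelow C} with hB₂
    have hcover : 𝒞 ⊆ A ∪ B₁ ∪ B₂ := by
      intro C hC
      by_cases h1 : BddAbove C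
      · by_cases h2 : BddBelow C
        · exact Or.inl (Or.inl ⟨hC, h1, h2⟩)
        · exact Or.inr ⟨hC, h2⟩
      · exact Or.inl (Or.inr ⟨hC, h1⟩)
    -- subsingleton of unbounded ones
    have hB₁sub : B₁.Subsingleton := by
      rintro C₁ ⟨hC₁, hb₁⟩ C₂ ⟨hC₂, hb₂⟩
      obtain ⟨t₁, ht₁, rfl⟩ := hC₁
      obtain ⟨t₂, ht₂, rfl⟩ := hC₂
      have ht₁' := mem_connectedComponentIn ht₁
      have ht₂' := mem_connectedComponentIn ht₂
      have hord₁ : (connectedComponentIn S t₁).OrdConnected :=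
        (isConnected_connectedComponentIn_iff.mpr ht₁).isPreconnected.ordConnected
      have hord₂ : (connectedComponentIn S t₂).OrdConnected :=
        (isConnected_connectedComponentIn_iff.mpr ht₂).isPreconnected.ordConnected
      obtain ⟨u, hu, huge⟩ := not_bddAbove_iff.mp hb₁ t₂
      obtain ⟨w, hw, hwge⟩ := not_bddAbove_iff.mp hb₂ u
      have hu₂ : u ∈ connectedComponentIn S t₂ := hord₂.out ht₂' hw ⟨huge.le, hwge.le⟩
      exact heq _ ⟨t₁, ht₁, rfl⟩ _ ⟨t₂, ht₂, rfl⟩ ⟨u, hu, hu₂⟩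
    have hB₂sub : B₂.Subsingleton := by
      rintro C₁ ⟨hC₁, hb₁⟩ C₂ ⟨hC₂, hb₂⟩
      obtain ⟨t₁, ht₁, rfl⟩ := hC₁
      obtain ⟨t₂, ht₂, rfl⟩ := hC₂
      have ht₁' := mem_connectedComponentIn ht₁
      have ht₂' := mem_connectedComponentIn ht₂
      have hord₂ : (connectedComponentIn S t₂).OrdConnected :=
        (isConnected_connectedComponentIn_iff.mpr ht₂).isPreconnected.ordConnected
      obtain ⟨u, hu, hule⟩ := not_bddBelow_iff.mp hb₁ t₂
      obtain ⟨w, hw, hwle⟩ := not_bddBelow_iff.mp hb₂ u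
      have hu₂ : u ∈ connectedComponentIn S t₂ := hord₂.out hw ht₂' ⟨hwle.le, hule.le⟩
      exact heq _ ⟨t₁, ht₁, rfl⟩ _ ⟨t₂, ht₂, rfl⟩ ⟨u, hu, hu₂⟩
    -- injection of A into roots
    classical
    set f : Set ℝ → ℝ := fun C =>
      if h : ∃ z ∈ C, P.derivative.eval z = 0 then h.choose else 0 with hf
    have hfA : ∀ C ∈ A, f C ∈ C ∧ f C ∈ R := by
      rintro C ⟨hC, hba, hbb⟩
      obtain ⟨t, ht, rfl⟩ := hC
      have hex : ∃ z ∈ connectedComponentIn S t, P.derivative.eval z = 0 :=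
        stmt4_crit P D hD hS t ht hba hbb
      rw [hf]
      simp only [dif_pos hex]
      exact ⟨hex.choose_spec.1, hex.choose_spec.2⟩
    have hfinj : Set.InjOn f A := by
      intro C₁ hC₁ C₂ hC₂ hfe
      exact heq _ hC₁.1 _ hC₂.1 ⟨f C₁, (hfA C₁ hC₁).1, hfe ▸ (hfA C₂ hC₂).1⟩
    have hAfin : A.Finite := Set.Finite.of_finite_image
      (hRfin.subset (fun y ⟨C, hC, hCy⟩ => hCy ▸ (hfA C hC).2)) hfinj
    have hAcard : A.ncard ≤ d - 1 := by
      calc A.ncard = (f '' A).ncard := (Set.ncard_image_of_injOn hfinj).symm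
        _ ≤ R.ncard := Set.ncard_le_ncard
            (fun y ⟨C, hC, hCy⟩ => hCy ▸ (hfA C hC).2) hRfin
        _ ≤ d - 1 := hRcard
    have hfin : 𝒞.Finite :=
      Set.Finite.subset ((hAfin.union hB₁sub.finite).union hB₂sub.finite) hcover
    refine ⟨hfin, ?_⟩
    calc 𝒞.ncard ≤ (A ∪ B₁ ∪ B₂).ncard := Set.ncard_le_ncard hcover
          ((hAfin.union hB₁sub.finite).union hB₂sub.finite)
      _ ≤ (A ∪ B₁).ncard + B₂.ncard := Set.ncard_union_le _ _
      _ ≤ A.ncard + B₁.ncard + B₂.ncard := by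
          have := Set.ncard_union_le A B₁; omega
      _ ≤ (d - 1) + 1 + 1 := by
          have h1 := (Set.ncard_le_one hB₁sub.finite).mpr hB₁sub
          have h2 := (Set.ncard_le_one hB₂sub.finite).mpr hB₂sub
          omega
      _ ≤ d + 1 := by omega
end

section
/- Let d ≥ 0 and K' ≥ 1 be integers, let D > 0, let n ≥ 0 be a real number, and let P₁,…,P_{K'} be real polynomials each of degree at most d. Then the set ⋂_{x=1}^{K'} {t ∈ [0,n] : |P_x(t)| > D} has at most (d+1)^{K'} connected components. -/
open Polynomial Set

private lemma exists_root_Ioo {Q : Polynomial ℝ} {a b : ℝ} (hab : a < b)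
    (h : Q.eval a < 0 ∧ 0 < Q.eval b ∨ 0 < Q.eval a ∧ Q.eval b < 0) :
    ∃ c ∈ Set.Ioo a b, Q.eval c = 0 := by
  have hc : ContinuousOn (fun x => Q.eval x) (Set.Icc a b) := Q.continuous.continuousOn
  rcases h with ⟨h1, h2⟩ | ⟨h1, h2⟩
  · have := intermediate_value_Ioo hab.le hc (f := fun x => Q.eval x)
      (Set.mem_Ioo.mpr ⟨h1, h2⟩)
    rcases this with ⟨c, hc1, hc2⟩
    exact ⟨c, hc1, hc2⟩
  · have := intermediate_value_Ioo' hab.le hc (f := fun x => Q.eval x)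
      (Set.mem_Ioo.mpr ⟨h2, h1⟩)
    rcases this with ⟨c, hc1, hc2⟩
    exact ⟨c, hc1, hc2⟩

/-- If a nonzero real polynomial is positive at `t` and `t'` but nonpositive somewhere in
between, then it has at least two roots (with multiplicity) in `(t, t')`. -/
private lemma two_roots {Q : Polynomial ℝ} (hQ : Q ≠ 0) {t t' m : ℝ} (hm1 : t < m)
    (hm2 : m < t') (ht : 0 < Q.eval t) (ht' : 0 < Q.eval t') (hmQ : Q.eval m ≤ 0) :
    2 ≤ (Q.roots.filter (fun s => t < s ∧ s < t')).card := by
  classical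
  by_contra hcon
  push_neg at hcon
  have htt' : t < t' := hm1.trans hm2
  have hcase : (Q.roots.filter (fun s => t < s ∧ s < t')).card = 0 ∨
      (Q.roots.filter (fun s => t < s ∧ s < t')).card = 1 := by omega
  rcases hcase with h0 | h1
  · -- no roots in (t,t') at all
    have hnil : Q.roots.filter (fun s => t < s ∧ s < t') = 0 :=
      Multiset.card_eq_zero.mp h0
    have hnr : ∀ s : ℝ, t < s → s < t' → Q.eval s ≠ 0 := by
      intro s hs1 hs2 hs0
      have hmem : s ∈ Q.roots := mem_roots'.mpr ⟨hQ, hs0⟩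
      have : s ∈ Q.roots.filter (fun s => t < s ∧ s < t') :=
        Multiset.mem_filter.mpr ⟨hmem, hs1, hs2⟩
      rw [hnil] at this
      exact absurd this (Multiset.notMem_zero s)
    rcases lt_or_eq_of_le hmQ with hlt | heq
    · rcases exists_root_Ioo hm1 (Or.inr ⟨ht, hlt⟩) with ⟨c, hc, hc0⟩
      exact hnr c hc.1 (hc.2.trans hm2) hc0
    · exact hnr m hm1 hm2 heq
  · -- exactly one simple root r in (t,t')
    rcases Multiset.card_eq_one.mp h1 with ⟨r, hr⟩
    have hrmem : r ∈ Q.roots.filter (fun s => t < s ∧ s < t') := by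
      rw [hr]; exact Multiset.mem_singleton_self r
    have hrroot : r ∈ Q.roots := (Multiset.mem_filter.mp hrmem).1
    have hrt : t < r := (Multiset.mem_filter.mp hrmem).2.1
    have hrt' : r < t' := (Multiset.mem_filter.mp hrmem).2.2
    have hRroot : Q.IsRoot r := (mem_roots'.mp hrroot).2
    set R := Q /ₘ (X - C r) with hRdef
    have hfac : (X - C r) * R = Q := mul_divByMonic_eq_iff_isRoot.mpr hRroot
    have hRne : R ≠ 0 := by
      intro h
      rw [h, mul_zero] at hfac
      exact hQ hfac.symm
    have hmulne : (X - C r) * R ≠ 0 := by rw [hfac]; exact hQ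
    have hroots : Q.roots = {r} + R.roots := by
      conv_lhs => rw [← hfac]
      rw [roots_mul hmulne, roots_X_sub_C]
    have hfilter : Q.roots.filter (fun s => t < s ∧ s < t')
        = {r} + R.roots.filter (fun s => t < s ∧ s < t') := by
      rw [hroots, Multiset.filter_add, Multiset.filter_singleton, if_pos ⟨hrt, hrt'⟩]
    have hRfil : R.roots.filter (fun s => t < s ∧ s < t') = 0 := by
      have hcard := congrArg Multiset.card hfilter
      rw [h1, Multiset.card_add, Multiset.card_singleton] at hcard
      rw [← Multiset.card_eq_zero]
      omega
    have hRnr : ∀ s : ℝ, t < s → s < t' → R.eval s ≠ 0 := by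
      intro s hs1 hs2 hs0
      have hmem : s ∈ R.roots := mem_roots'.mpr ⟨hRne, hs0⟩
      have : s ∈ R.roots.filter (fun s => t < s ∧ s < t') :=
        Multiset.mem_filter.mpr ⟨hmem, hs1, hs2⟩
      rw [hRfil] at this
      exact absurd this (Multiset.notMem_zero s)
    -- the only root of Q in (t,t') is r
    have honly : ∀ s : ℝ, t < s → s < t' → Q.eval s = 0 → s = r := by
      intro s hs1 hs2 hs0
      have hmem : s ∈ Q.roots := mem_roots'.mpr ⟨hQ, hs0⟩
      have : s ∈ Q.roots.filter (fun s => t < s ∧ s < t') :=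
        Multiset.mem_filter.mpr ⟨hmem, hs1, hs2⟩
      rw [hr] at this
      exact Multiset.mem_singleton.mp this
    set s₀ := (t + r) / 2 with hs₀
    set s₁ := (r + t') / 2 with hs₁
    have hts₀ : t < s₀ := by rw [hs₀]; linarith
    have hs₀r : s₀ < r := by rw [hs₀]; linarith
    have hrs₁ : r < s₁ := by rw [hs₁]; linarith
    have hs₁t' : s₁ < t' := by rw [hs₁]; linarith
    have hQs₀ : 0 < Q.eval s₀ := by
      by_contra h
      push_neg at h
      rcases lt_or_eq_of_le h with hlt | heq
      · rcases exists_root_Ioo hts₀ (Or.inr ⟨ht, hlt⟩) with ⟨c, hc, hc0⟩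
        have hcr := honly c hc.1 (hc.2.trans (hs₀r.trans hrt')) hc0
        rw [hcr] at hc
        exact lt_asymm hs₀r hc.2
      · have := honly s₀ hts₀ (hs₀r.trans hrt') heq
        exact absurd this (ne_of_lt hs₀r)
    have hQs₁ : 0 < Q.eval s₁ := by
      by_contra h
      push_neg at h
      rcases lt_or_eq_of_le h with hlt | heq
      · rcases exists_root_Ioo hs₁t' (Or.inl ⟨hlt, ht'⟩) with ⟨c, hc, hc0⟩
        have hcr := honly c ((hrt.trans hrs₁).trans hc.1) hc.2 hc0
        rw [hcr] at hc
        exact lt_asymm hrs₁ hc.1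
      · have := honly s₁ (hrt.trans hrs₁) hs₁t' heq
        exact absurd this.symm (ne_of_lt hrs₁)
    have hevals₀ : (s₀ - r) * R.eval s₀ = Q.eval s₀ := by
      conv_rhs => rw [← hfac]
      simp [eval_mul]
    have hevals₁ : (s₁ - r) * R.eval s₁ = Q.eval s₁ := by
      conv_rhs => rw [← hfac]
      simp [eval_mul]
    have hRs₀ : R.eval s₀ < 0 := by nlinarith
    have hRs₁ : 0 < R.eval s₁ := by nlinarith
    rcases exists_root_Ioo (hs₀r.trans hrs₁) (Or.inl ⟨hRs₀, hRs₁⟩) with ⟨c, hc, hc0⟩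
    exact hRnr c (hts₀.trans hc.1) (hc.2.trans hs₁t') hc0

/-- Root-counting jump: two roots in `(t,t')` force the count of roots below `t'` to exceed
the count below `t` by at least `2`. -/
private lemma nu_jump {Q : Polynomial ℝ} {t t' : ℝ}
    (h2 : 2 ≤ (Q.roots.filter (fun s => t < s ∧ s < t')).card) :
    (Q.roots.filter (fun s => s < t)).card + 2 ≤ (Q.roots.filter (fun s => s < t')).card := by
  classical
  have key : Q.roots.filter (fun s => s < t) + Q.roots.filter (fun s => t < s ∧ s < t')
      ≤ Q.roots.filter (fun s => s < t') := by
    have h := Multiset.filter_add_filter (fun s : ℝ => s < t) (fun s : ℝ => t < s ∧ s < t')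
      Q.roots
    have hand : Q.roots.filter (fun s : ℝ => s < t ∧ (t < s ∧ s < t')) = 0 := by
      rw [Multiset.filter_eq_nil]
      intro a _ ha
      exact absurd (ha.1.trans ha.2.1) (lt_irrefl a)
    have hor : Q.roots.filter (fun s : ℝ => s < t ∨ (t < s ∧ s < t'))
        ≤ Q.roots.filter (fun s : ℝ => s < t') := by
      apply Multiset.monotone_filter_right
      intro a ha
      rcases ha with h | h
      · exact h.trans (by
          by_contra hc
          push_neg at hc
          have : (Q.roots.filter (fun s => t < s ∧ s < t')).card = 0 := by
            rw [Multiset.card_eq_zero, Multiset.filter_eq_nil]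
            intro b _ hb
            exact absurd (hb.1.trans hb.2) (not_lt.mpr hc |>.elim (hb.1.trans hb.2))
          omega)
      · exact h.2
    calc Q.roots.filter (fun s => s < t) + Q.roots.filter (fun s => t < s ∧ s < t')
        = Q.roots.filter (fun s : ℝ => s < t ∨ (t < s ∧ s < t'))
          + Q.roots.filter (fun s : ℝ => s < t ∧ (t < s ∧ s < t')) := h
      _ = Q.roots.filter (fun s : ℝ => s < t ∨ (t < s ∧ s < t')) := by rw [hand, add_zero]
      _ ≤ Q.roots.filter (fun s : ℝ => s < t') := hor
  have := Multiset.card_le_card key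
  rw [Multiset.card_add] at this
  omega

/-- Let `d ≥ 0`, `K' ≥ 1`, `D > 0`, `n ≥ 0` a real number, and `P₁,…,P_{K'}`
real polynomials of degree at most `d`. Then `⋂_{x=1}^{K'} {t ∈ [0,n] : |P_x(t)| > D}` has
at most `(d+1)^{K'}` connected components: the collection of its connected components (for
the subspace topology) is finite of cardinality at most `(d+1)^{K'}`. -/
theorem stmt5 (d K' : ℕ) (hK' : 1 ≤ K') (D : ℝ) (hD : 0 < D) (n : ℝ) (hn : 0 ≤ n)
    (P : Fin K' → Polynomial ℝ) (hdeg : ∀ x, (P x).natDegree ≤ d) :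
    ((fun t => connectedComponentIn
        (⋂ x : Fin K', {s : ℝ | s ∈ Set.Icc 0 n ∧ D < |(P x).eval s|}) t) ''
        (⋂ x : Fin K', {s : ℝ | s ∈ Set.Icc 0 n ∧ D < |(P x).eval s|})).Finite ∧
    ((fun t => connectedComponentIn
        (⋂ x : Fin K', {s : ℝ | s ∈ Set.Icc 0 n ∧ D < |(P x).eval s|}) t) ''
        (⋂ x : Fin K', {s : ℝ | s ∈ Set.Icc 0 n ∧ D < |(P x).eval s|})).ncard
      ≤ (d + 1) ^ K' := by
  classical
  set S : Set ℝ := ⋂ x : Fin K', {s : ℝ | s ∈ Set.Icc 0 n ∧ D < |(P x).eval s|} with hSdef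
  rcases S.eq_empty_or_nonempty with hemp | ⟨t₀, ht₀⟩
  · rw [hemp]
    simp
  · -- the polynomials Q x = (P x - D)(P x + D), nonzero since positive at t₀
    set Q : Fin K' → Polynomial ℝ := fun x => (P x - C D) * (P x + C D) with hQdef
    have hmemS : ∀ {a : ℝ}, a ∈ S → ∀ x : Fin K', a ∈ Set.Icc 0 n ∧ D < |(P x).eval a| := by
      intro a ha x
      exact Set.mem_iInter.mp ha x
    have hQpos : ∀ {a : ℝ}, a ∈ S → ∀ x : Fin K', 0 < (Q x).eval a := by
      intro a ha x
      have h := (hmemS ha x).2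
      have habs : D < |(P x).eval a| := h
      rw [hQdef]
      simp only [eval_mul, eval_sub, eval_add, eval_C]
      rcases lt_abs.mp habs with hpos | hneg
      · nlinarith
      · nlinarith
    have hQne : ∀ x, Q x ≠ 0 := by
      intro x h
      have := hQpos ht₀ x
      rw [h] at this
      simp at this
    have hQdeg : ∀ x, (Q x).natDegree ≤ 2 * d := by
      intro x
      calc (Q x).natDegree ≤ (P x - C D).natDegree + (P x + C D).natDegree :=
            natDegree_mul_le
        _ ≤ d + d := by
            apply Nat.add_le_add
            · exact le_trans (natDegree_sub_le _ _) (by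
                simp only [natDegree_C, max_le_iff]
                exact ⟨hdeg x, Nat.zero_le d⟩)
            · exact le_trans (natDegree_add_le _ _) (by
                simp only [natDegree_C, max_le_iff]
                exact ⟨hdeg x, Nat.zero_le d⟩)
        _ = 2 * d := by ring
    -- ν x a : number of roots (with multiplicity) of Q x below a
    set ν : Fin K' → ℝ → ℕ := fun x a => ((Q x).roots.filter (fun s => s < a)).card with hνdef
    have hνle : ∀ x a, ν x a ≤ 2 * d := by
      intro x a
      calc ν x a ≤ Multiset.card (Q x).roots := Multiset.card_le_card (Multiset.filter_le _ _)
        _ ≤ (Q x).natDegree := (Q x).card_roots'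
        _ ≤ 2 * d := hQdeg x
    -- the labelling map
    set F : ℝ → (Fin K' → Fin (d + 1)) := fun a x => ⟨min (ν x a / 2) d, by omega⟩ with hFdef
    -- key injectivity: distinct components get distinct labels
    have key : ∀ a b : ℝ, a ∈ S → b ∈ S → a < b →
        connectedComponentIn S a ≠ connectedComponentIn S b → F a ≠ F b := by
      intro a b ha hb hab hne
      -- find a gap point m
      have hgap : ∃ m ∈ Set.Ioo a b, m ∉ S := by
        by_contra h
        push_neg at h
        have hsub : Set.Icc a b ⊆ S := by
          intro s hs
          rcases eq_or_lt_of_le hs.1 with h1 | h1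
          · exact h1 ▸ ha
          rcases eq_or_lt_of_le hs.2 with h2 | h2
          · exact h2 ▸ hb
          exact h s ⟨h1, h2⟩
        have := isPreconnected_Icc.subset_connectedComponentIn
          (Set.mem_Icc.mpr ⟨le_refl a, hab.le⟩) hsub
        have hbmem : b ∈ connectedComponentIn S a := this (Set.mem_Icc.mpr ⟨hab.le, le_refl b⟩)
        exact hne (connectedComponentIn_eq hbmem)
      rcases hgap with ⟨m, hm, hmS⟩
      -- m ∈ [0,n], so some x has |P x (m)| ≤ D
      have hx0 : (Fin K') := ⟨0, hK'⟩
      have haIcc := (hmemS ha hx0).1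
      have hbIcc := (hmemS hb hx0).1
      have hmIcc : m ∈ Set.Icc (0:ℝ) n :=
        ⟨haIcc.1.trans hm.1.le, hm.2.le.trans hbIcc.2⟩
      have hex : ∃ x : Fin K', ¬ (D < |(P x).eval m|) := by
        by_contra h
        push_neg at h
        exact hmS (Set.mem_iInter.mpr fun x => ⟨hmIcc, h x⟩)
      rcases hex with ⟨x, hxm⟩
      push_neg at hxm
      have hQm : (Q x).eval m ≤ 0 := by
        rw [hQdef]
        simp only [eval_mul, eval_sub, eval_add, eval_C]
        rcases abs_le.mp hxm with ⟨h1, h2⟩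
        nlinarith
      have h2r := two_roots (hQne x) hm.1 hm.2 (hQpos ha x) (hQpos hb x) hQm
      have hjump := nu_jump (Q := Q x) (t := a) (t' := b) h2r
      -- ν x a + 2 ≤ ν x b, both ≤ 2d
      have hνa := hνle x a
      have hνb := hνle x b
      have hja : ν x a = ((Q x).roots.filter (fun s => s < a)).card := rfl
      have hjb : ν x b = ((Q x).roots.filter (fun s => s < b)).card := rfl
      intro hFab
      have hFx := congrFun hFab x
      rw [hFdef] at hFx
      simp only [Fin.mk.injEq] at hFx
      have hmina : min (ν x a / 2) d = ν x a / 2 := Nat.min_eq_left (by omega)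
      have hminb : min (ν x b / 2) d = ν x b / 2 := Nat.min_eq_left (by omega)
      rw [hmina, hminb] at hFx
      omega
    -- wrap up: inject the set of components into Fin K' → Fin (d+1)
    set G : Set ℝ → (Fin K' → Fin (d + 1)) :=
      fun C => if h : C.Nonempty then F h.choose else F 0 with hGdef
    have hinj : Set.InjOn G ((fun t => connectedComponentIn S t) '' S) := by
      rintro C1 ⟨t1, ht1, rfl⟩ C2 ⟨t2, ht2, rfl⟩ hG
      by_contra hne
      have hne1 : (connectedComponentIn S t1).Nonempty :=
        ⟨t1, mem_connectedComponentIn ht1⟩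
      have hne2 : (connectedComponentIn S t2).Nonempty :=
        ⟨t2, mem_connectedComponentIn ht2⟩
      rw [hGdef] at hG
      simp only [dif_pos hne1, dif_pos hne2] at hG
      set a := hne1.choose with hadef
      set b := hne2.choose with hbdef
      have haC : a ∈ connectedComponentIn S t1 := hne1.choose_spec
      have hbC : b ∈ connectedComponentIn S t2 := hne2.choose_spec
      have haS : a ∈ S := connectedComponentIn_subset S t1 haC
      have hbS : b ∈ S := connectedComponentIn_subset S t2 hbC
      have haeq : connectedComponentIn S a = connectedComponentIn S t1 :=
        (connectedComponentIn_eq haC).symm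
      have hbeq : connectedComponentIn S b = connectedComponentIn S t2 :=
        (connectedComponentIn_eq hbC).symm
      have habne : connectedComponentIn S a ≠ connectedComponentIn S b := by
        rw [haeq, hbeq]; exact hne
      have habne' : a ≠ b := by
        intro h
        exact habne (h ▸ rfl)
      rcases lt_or_gt_of_ne habne' with h | h
      · exact key a b haS hbS h habne hG
      · exact key b a hbS haS h (Ne.symm habne) hG.symm
    have hfinim : (G '' ((fun t => connectedComponentIn S t) '' S)).Finite :=
      Set.toFinite _
    have hfin : ((fun t => connectedComponentIn S t) '' S).Finite :=
      Set.Finite.of_finite_image hfinim hinj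
    constructor
    · exact hfin
    · have h1 : ((fun t => connectedComponentIn S t) '' S).ncard
          = (G '' ((fun t => connectedComponentIn S t) '' S)).ncard :=
        (Set.ncard_image_of_injOn hinj).symm
      rw [h1]
      calc (G '' ((fun t => connectedComponentIn S t) '' S)).ncard
          ≤ (Set.univ : Set (Fin K' → Fin (d + 1))).ncard :=
            Set.ncard_le_ncard (Set.subset_univ _) (Set.toFinite _)
        _ = (d + 1) ^ K' := by
            rw [Set.ncard_univ, Nat.card_eq_fintype_card]
            simp
end

section
/- Let (Ω, ℱ, ℙ) be a probability space, let (U_t)_{t≥1} be a sequence of i.i.d. integrable real random variables with U_t ≤ 0 almost surely, let δ ∈ (0,1), and let (δ_n)_{n≥1} be a non-decreasing sequence of [0,1]-valued random variables such that liminf_{n→∞} δ_n ≥ δ almost surely. Define the quantile q_U(β) = inf{u ∈ ℝ : ℙ(U₁ ≤ u) ≥ β} for β ∈ [0,1]. Then, almost surely, limsup_{n→∞} sup{ (1/n) ∑_{t∈S} U_t : S ⊆ {1,…,n}, |S| ≥ δ_n · n } ≤ E[U₁ · 1_{U₁ > q_U(1−δ)}]. -/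
open MeasureTheory ProbabilityTheory Filter

/-! With `q = q_U(1 - δ) ≤ 0` one has `U_t ≤ (U_t - q)⁺ + q`, so for `|S| ≥ δ_n n`
`∑_{t ∈ S} U_t ≤ ∑_{t ≤ n} (U_t - q)⁺ + q δ_n n`. By the strong law the average of `(U_t - q)⁺`
tends to `E (U₁ - q)⁺ = E[U₁; U₁ > q] - q ℙ(U₁ > q)`, and right-continuity of the distribution
function gives `ℙ(U₁ > q) ≤ δ ≤ liminf δ_n`; as `q ≤ 0` the bound follows. -/

noncomputable def rvQuantile {Ω : Type*} [MeasurableSpace Ω] (μ : Measure Ω)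
    (V : Ω → ℝ) (β : ℝ) : ℝ :=
  sInf {u : ℝ | ENNReal.ofReal β ≤ μ {ω | V ω ≤ u}}

section Quantile

variable {Ω : Type*} [MeasurableSpace Ω] {μ : Measure Ω} {V : Ω → ℝ}

theorem StieltjesFunction.le_apply_sInf_setOf_le (f : StieltjesFunction ℝ) {β : ℝ}
    (hne : ∃ u, β ≤ f u) : β ≤ f (sInf {u | β ≤ f u}) := by
  rw [← f.iInf_Ioi_eq]
  refine le_ciInf fun ⟨r, hr⟩ => ?_
  obtain ⟨u, hu, hur⟩ := exists_lt_of_csInf_lt hne hr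
  exact le_trans hu (f.mono hur.le)

theorem bddBelow_setOf_le_of_tendsto_atBot {f : ℝ → ℝ} (hf : Tendsto f atBot (nhds 0))
    {β : ℝ} (hβ : 0 < β) : BddBelow {u | β ≤ f u} := by
  obtain ⟨a, ha⟩ := eventually_atBot.1 (hf.eventually (gt_mem_nhds hβ))
  exact ⟨a, fun u hu => le_of_not_ge fun hua => (ha u hua).not_ge hu⟩

theorem cdf_map_apply [IsProbabilityMeasure μ] (hV : AEMeasurable V μ) (u : ℝ) :
    cdf (μ.map V) u = μ.real {ω | V ω ≤ u} := by
  have := Measure.isProbabilityMeasure_map (μ := μ) hV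
  rw [cdf_eq_real, map_measureReal_apply_of_aemeasurable hV measurableSet_Iic]
  rfl

theorem rvQuantile_eq_sInf_cdf [IsProbabilityMeasure μ] (hV : AEMeasurable V μ) (β : ℝ) :
    rvQuantile μ V β = sInf {u | β ≤ cdf (μ.map V) u} := by
  simp only [rvQuantile, cdf_map_apply hV, measureReal_def,
    ENNReal.ofReal_le_iff_le_toReal (measure_ne_top μ _)]

theorem rvQuantile_le [IsProbabilityMeasure μ] (hV : AEMeasurable V μ) {β u : ℝ} (hβ : 0 < β)
    (hu : β ≤ μ.real {ω | V ω ≤ u}) : rvQuantile μ V β ≤ u := by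
  rw [rvQuantile_eq_sInf_cdf hV]
  exact csInf_le (bddBelow_setOf_le_of_tendsto_atBot (tendsto_cdf_atBot _) hβ)
    (by rwa [Set.mem_ofPred_eq, cdf_map_apply hV])

theorem measureReal_rvQuantile_lt_le [IsProbabilityMeasure μ] (hV : AEMeasurable V μ)
    {β u : ℝ} (hu : β ≤ μ.real {ω | V ω ≤ u}) :
    μ.real {ω | rvQuantile μ V β < V ω} ≤ 1 - β := by
  have hq := (cdf (μ.map V)).le_apply_sInf_setOf_le (β := β) ⟨u, by rwa [cdf_map_apply hV]⟩
  rw [← rvQuantile_eq_sInf_cdf hV, cdf_map_apply hV] at hq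
  have hcompl : {ω | rvQuantile μ V β < V ω} = {ω | V ω ≤ rvQuantile μ V β}ᶜ := by
    ext; simp
  rw [hcompl, probReal_compl_eq_one_sub₀ (nullMeasurableSet_le hV aemeasurable_const)]
  linarith

end Quantile

theorem integral_max_sub_add_mul_le {Ω : Type*} [MeasurableSpace Ω] {μ : Measure Ω}
    [IsFiniteMeasure μ] {V : Ω → ℝ} (hV : Integrable V μ) {q δ : ℝ} (hq : q ≤ 0)
    (hδ : μ.real {ω | q < V ω} ≤ δ) :
    ∫ ω, max (V ω - q) 0 ∂μ + q * δ ≤ ∫ ω, Set.indicator {ω | q < V ω} V ω ∂μ := by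
  have hs : NullMeasurableSet {ω | q < V ω} μ :=
    nullMeasurableSet_lt aemeasurable_const hV.aemeasurable
  have hmax : (fun ω => max (V ω - q) 0) = Set.indicator {ω | q < V ω} (fun ω => V ω - q) := by
    ext ω
    by_cases h : q < V ω
    · simp [h, h.le]
    · simp [h, not_lt.1 h]
  rw [hmax, integral_indicator₀ hs, integral_indicator₀ hs,
    integral_sub hV.integrableOn (integrable_const q), setIntegral_const, smul_eq_mul]
  nlinarith

theorem ae_tendsto_sum_Icc_div {Ω : Type*} [MeasurableSpace Ω] {μ : Measure Ω}
    {U : ℕ → Ω → ℝ} (hindep : Pairwise fun s t => IndepFun (U s) (U t) μ)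
    (hident : ∀ t, IdentDistrib (U t) (U 1) μ μ) {f : ℝ → ℝ} (hf : Measurable f)
    (hint : Integrable (fun ω => f (U 1 ω)) μ) :
    ∀ᵐ ω ∂μ, Tendsto (fun n : ℕ => (∑ t ∈ Finset.Icc 1 n, f (U t ω)) / n) atTop
      (nhds (∫ ω, f (U 1 ω) ∂μ)) := by
  have hslln := strong_law_ae_real (fun i ω => f (U (i + 1) ω)) hint
    (fun _ _ hij => (hindep (by omega)).comp hf hf)
    (fun i => ((hident (i + 1)).comp hf).trans ((hident 1).comp hf).symm)
  filter_upwards [hslln] with ω hω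
  have hshift : ∀ n, ∑ t ∈ Finset.Icc 1 n, f (U t ω) = ∑ i ∈ Finset.range n, f (U (i + 1) ω) := by
    intro n
    rw [Finset.range_eq_Ico, Finset.sum_Ico_add' (fun t => f (U t ω)),
      ← Finset.Ico_add_one_right_eq_Icc]
  simpa only [hshift] using hω

theorem Finset.sum_le_sum_max_sub_add_mul {S T : Finset ℕ} (hST : S ⊆ T) (u : ℕ → ℝ)
    {q c : ℝ} (hq : q ≤ 0) (hc : c ≤ S.card) :
    ∑ t ∈ S, u t ≤ ∑ t ∈ T, max (u t - q) 0 + q * c :=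
  calc ∑ t ∈ S, u t ≤ ∑ t ∈ S, (max (u t - q) 0 + q) :=
        Finset.sum_le_sum fun t _ => by linarith [le_max_left (u t - q) 0]
    _ = ∑ t ∈ S, max (u t - q) 0 + q * S.card := by
        rw [Finset.sum_add_distrib, Finset.sum_const, nsmul_eq_mul, mul_comm]
    _ ≤ ∑ t ∈ T, max (u t - q) 0 + q * c := by
        gcongr ?_ + ?_
        · exact Finset.sum_le_sum_of_subset_of_nonneg hST fun t _ _ => le_max_right _ _
        · exact mul_le_mul_of_nonpos_left hc hq

def largeSubsetAverages (u : ℕ → ℝ) (c : ℝ) (n : ℕ) : Set ℝ :=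
  {v | ∃ S : Finset ℕ, S ⊆ Finset.Icc 1 n ∧ c * n ≤ (S.card : ℝ) ∧
    v = (1 / (n : ℝ)) * ∑ t ∈ S, u t}

section LargeSubsetAverages

variable {u : ℕ → ℝ} {c : ℝ} {n : ℕ}

theorem le_of_mem_largeSubsetAverages {q v : ℝ} (hq : q ≤ 0) (hn : 0 < n)
    (hv : v ∈ largeSubsetAverages u c n) :
    v ≤ (∑ t ∈ Finset.Icc 1 n, max (u t - q) 0) / n + q * c := by
  obtain ⟨S, hS, hcard, rfl⟩ := hv
  have hn' : (0 : ℝ) < n := Nat.cast_pos.2 hn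
  have := Finset.sum_le_sum_max_sub_add_mul hS u hq hcard
  calc 1 / (n : ℝ) * ∑ t ∈ S, u t
      ≤ 1 / n * (∑ t ∈ Finset.Icc 1 n, max (u t - q) 0 + q * (c * n)) := by gcongr
    _ = _ := by field_simp

theorem sum_Icc_div_mem_largeSubsetAverages (hc : c ≤ 1) :
    (∑ t ∈ Finset.Icc 1 n, u t) / n ∈ largeSubsetAverages u c n := by
  refine ⟨Finset.Icc 1 n, subset_rfl, ?_, one_div_mul_eq_div _ _ |>.symm⟩
  rw [Nat.card_Icc, Nat.add_sub_cancel]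
  exact mul_le_of_le_one_left (Nat.cast_nonneg n) hc

end LargeSubsetAverages

theorem limsup_sSup_largeSubsetAverages_le {u d : ℕ → ℝ} (hd : ∀ n, d n ∈ Set.Icc (0 : ℝ) 1)
    {q a b δ : ℝ} (hq : q ≤ 0)
    (ha : Tendsto (fun n : ℕ => (∑ t ∈ Finset.Icc 1 n, max (u t - q) 0) / n) atTop (nhds a))
    (hb : Tendsto (fun n : ℕ => (∑ t ∈ Finset.Icc 1 n, u t) / n) atTop (nhds b))
    (hδ : δ ≤ liminf d atTop) :
    limsup (fun n => sSup (largeSubsetAverages u (d n) n)) atTop ≤ a + q * δ := by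
  have hbound : ∀ n, 0 < n → ∀ v ∈ largeSubsetAverages u (d n) n,
      v ≤ (∑ t ∈ Finset.Icc 1 n, max (u t - q) 0) / n + q * d n :=
    fun n hn v hv => le_of_mem_largeSubsetAverages hq hn hv
  -- the whole of `Icc 1 n` is admissible, which bounds the suprema from below
  have hlow : ∀ᶠ n in atTop,
      (∑ t ∈ Finset.Icc 1 n, u t) / n ≤ sSup (largeSubsetAverages u (d n) n) := by
    filter_upwards [eventually_gt_atTop 0] with n hn
    exact le_csSup ⟨_, hbound n hn⟩ (sum_Icc_div_mem_largeSubsetAverages (hd n).2)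
  have hcobdd : IsCoboundedUnder (· ≤ ·) atTop
      (fun n => sSup (largeSubsetAverages u (d n) n)) :=
    (hb.isBoundedUnder_ge.mono_ge hlow).isCoboundedUnder_le
  have hbelow : ∀ δ' < δ, limsup (fun n => sSup (largeSubsetAverages u (d n) n)) atTop
      ≤ a + q * δ' := by
    intro δ' hδ'
    have hd' : ∀ᶠ n in atTop, δ' < d n :=
      eventually_lt_of_lt_liminf (hδ'.trans_le hδ) (isBoundedUnder_of ⟨0, fun n => (hd n).1⟩)
    have hup : ∀ᶠ n in atTop, sSup (largeSubsetAverages u (d n) n)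
        ≤ (∑ t ∈ Finset.Icc 1 n, max (u t - q) 0) / n + q * δ' := by
      filter_upwards [eventually_gt_atTop 0, hd'] with n hn hdn
      refine csSup_le ⟨_, sum_Icc_div_mem_largeSubsetAverages (hd n).2⟩ fun v hv => ?_
      linarith [hbound n hn v hv, mul_le_mul_of_nonpos_left hdn.le hq]
    have hlim := ha.add_const (q * δ')
    exact (limsup_le_limsup hup hcobdd hlim.isBoundedUnder_le).trans_eq hlim.limsup_eq
  have hcont : Tendsto (fun δ' => a + q * δ') (nhdsWithin δ (Set.Iio δ)) (nhds (a + q * δ)) :=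
    ((continuous_const.add (continuous_const.mul continuous_id)).tendsto δ).mono_left
      nhdsWithin_le_nhds
  exact ge_of_tendsto hcont (eventually_nhdsWithin_of_forall hbelow)

theorem stmt6_general {Ω : Type*} [MeasurableSpace Ω] (μ : Measure Ω) [IsProbabilityMeasure μ]
    (U : ℕ → Ω → ℝ)
    (hindep : iIndepFun U μ)
    (hident : ∀ t, IdentDistrib (U t) (U 1) μ μ)
    (hint : Integrable (U 1) μ)
    (hnonpos : ∀ t, ∀ᵐ ω ∂μ, U t ω ≤ 0)
    (δ : ℝ) (hδ : δ ∈ Set.Ioo (0:ℝ) 1)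
    (δseq : ℕ → Ω → ℝ)
    (hδ01 : ∀ n ω, δseq n ω ∈ Set.Icc (0:ℝ) 1)
    (hliminf : ∀ᵐ ω ∂μ, δ ≤ liminf (fun n => δseq n ω) atTop) :
    ∀ᵐ ω ∂μ,
      limsup (fun n : ℕ => sSup {v : ℝ | ∃ S : Finset ℕ, S ⊆ Finset.Icc 1 n ∧
          δseq n ω * n ≤ (S.card : ℝ) ∧ v = (1 / (n : ℝ)) * ∑ t ∈ S, U t ω}) atTop
        ≤ ∫ ω', Set.indicator {ω'' | rvQuantile μ (U 1) (1 - δ) < U 1 ω''} (U 1) ω' ∂μ := by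
  obtain ⟨hδ0, hδ1⟩ := hδ
  have hV : AEMeasurable (U 1) μ := (hident 1).aemeasurable_fst
  have hsure : μ.real {ω | U 1 ω ≤ 0} = 1 := by
    rw [measureReal_def, (ae_iff_measure_eq (nullMeasurableSet_le hV aemeasurable_const)).1
      (hnonpos 1), measure_univ, ENNReal.toReal_one]
  set q := rvQuantile μ (U 1) (1 - δ)
  have hq : q ≤ 0 := rvQuantile_le hV (by linarith) (by linarith)
  have htail : μ.real {ω | q < U 1 ω} ≤ δ := by
    linarith [measureReal_rvQuantile_lt_le (β := 1 - δ) hV (u := 0) (by linarith)]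
  have hpair : Pairwise fun s t => IndepFun (U s) (U t) μ := fun _ _ h => hindep.indepFun h
  have hposPart : Measurable fun x : ℝ => max (x - q) 0 := by fun_prop
  filter_upwards [ae_tendsto_sum_Icc_div hpair hident hposPart
      (hint.sub (integrable_const q)).pos_part,
    ae_tendsto_sum_Icc_div hpair hident measurable_id hint, hliminf] with ω hpos havg hlim
  exact (limsup_sSup_largeSubsetAverages_le (hδ01 · ω) hq hpos havg hlim).trans
    (integral_max_sub_add_mul_le hint hq htail)

/-- Let `(U_t)` be i.i.d. integrable non-positive real random variables,
`δ ∈ (0,1)`, and `(δ_n)` a non-decreasing sequence of `[0,1]`-valued random variables with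
`liminf δ_n ≥ δ` a.s. Then, almost surely,
`limsup_n sup{ (1/n) ∑_{t∈S} U_t : S ⊆ {1,…,n}, |S| ≥ δ_n n } ≤ E[U₁ 1_{U₁ > q_U(1−δ)}]`. -/
theorem stmt6 {Ω : Type*} [MeasurableSpace Ω] (μ : Measure Ω) [IsProbabilityMeasure μ]
    (U : ℕ → Ω → ℝ) (hmeas : ∀ t, Measurable (U t))
    (hindep : iIndepFun U μ)
    (hident : ∀ t, IdentDistrib (U t) (U 1) μ μ)
    (hint : Integrable (U 1) μ)
    (hnonpos : ∀ t, ∀ᵐ ω ∂μ, U t ω ≤ 0)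
    (δ : ℝ) (hδ : δ ∈ Set.Ioo (0:ℝ) 1)
    (δseq : ℕ → Ω → ℝ) (hδmeas : ∀ n, Measurable (δseq n))
    (hδ01 : ∀ n ω, δseq n ω ∈ Set.Icc (0:ℝ) 1)
    (hδmono : ∀ ω, Monotone fun n => δseq n ω)
    (hliminf : ∀ᵐ ω ∂μ, δ ≤ liminf (fun n => δseq n ω) atTop) :
    ∀ᵐ ω ∂μ,
      limsup (fun n : ℕ => sSup {v : ℝ | ∃ S : Finset ℕ, S ⊆ Finset.Icc 1 n ∧
          δseq n ω * n ≤ (S.card : ℝ) ∧ v = (1 / (n : ℝ)) * ∑ t ∈ S, U t ω}) atTop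
        ≤ ∫ ω', Set.indicator {ω'' | rvQuantile μ (U 1) (1 - δ) < U 1 ω''} (U 1) ω' ∂μ :=
  stmt6_general μ U hindep hident hint hnonpos δ hδ δseq hδ01 hliminf
end

section
/- Let (Ω, ℱ, ℙ) be a probability space, let (V_t)_{t≥1} be a sequence of i.i.d. integrable real random variables with V_t ≥ 0 almost surely, let δ ∈ (0,1), and let (δ_n)_{n≥1} be a non-increasing sequence of [0,1]-valued random variables such that limsup_{n→∞} δ_n ≤ δ almost surely. Define the quantile q_V(β) = inf{u ∈ ℝ : ℙ(V₁ ≤ u) ≥ β} for β ∈ [0,1]. Then, almost surely, limsup_{n→∞} sup{ (1/n) ∑_{t∈S} V_t : S ⊆ {1,…,n}, |S| ≤ δ_n · n } ≤ E[V₁ · 1_{V₁ ≥ q_V(1−δ)}]. -/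
open MeasureTheory ProbabilityTheory Filter

/-!
Let `q` be the `(1 - δ)`-quantile of `V₁`; it is nonnegative and `ℙ(V₁ ≥ q) ≥ δ`.
Since `V ≤ (V - q)⁺ + q`, every sum over `S ⊆ {1,…,n}` with `|S| ≤ δ_n n` is at most
`∑_{t ≤ n} (V_t - q)⁺ + δ_n n q`. By the strong law the average of the first term tends to
`E[(V₁ - q)⁺]`, so the limsup is at most `E[(V₁ - q)⁺] + δ q`, and
`E[(V₁ - q)⁺] = E[V₁ 1_{V₁ ≥ q}] - q ℙ(V₁ ≥ q) ≤ E[V₁ 1_{V₁ ≥ q}] - δ q`.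
-/

open Finset Function Topology

section Quantile

variable {Ω : Type*} [MeasurableSpace Ω] {μ : Measure Ω} {V : Ω → ℝ} {β : ℝ}

lemma rvQuantile_nonneg (hV : ∀ᵐ ω ∂μ, 0 ≤ V ω) (hβ : 0 < β) : 0 ≤ rvQuantile μ V β := by
  refine Real.sInf_nonneg fun u hu => ?_
  by_contra! hu0
  have hnull : μ {ω | V ω ≤ u} = 0 :=
    measure_mono_null (fun ω hω => not_le.2 (lt_of_le_of_lt hω hu0)) (ae_iff.1 hV)
  simp only [Set.mem_ofPred_eq, hnull, nonpos_iff_eq_zero, ENNReal.ofReal_eq_zero] at hu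
  linarith

lemma bddBelow_setOf_ofReal_le_measure_le [IsFiniteMeasure μ] (hV : Measurable V) (hβ : 0 < β) :
    BddBelow {u : ℝ | ENNReal.ofReal β ≤ μ {ω | V ω ≤ u}} := by
  have hlim : Tendsto (fun n : ℕ => μ {ω | V ω ≤ -n}) atTop (𝓝 0) := by
    have hanti : Antitone fun n : ℕ => {ω | V ω ≤ -n} := fun m n hmn ω hω => by
      simp only [Set.mem_ofPred_eq] at hω ⊢
      linarith [(Nat.cast_le (α := ℝ)).2 hmn]
    have hempty : ⋂ n : ℕ, {ω | V ω ≤ -n} = ∅ := by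
      refine Set.eq_empty_of_forall_notMem fun ω hω => ?_
      obtain ⟨n, hn⟩ := exists_nat_gt (-V ω)
      have := Set.mem_iInter.1 hω n
      simp only [Set.mem_ofPred_eq] at this
      linarith
    simpa [Function.comp_def, hempty] using tendsto_measure_iInter_atTop
      (fun n => (measurableSet_le hV measurable_const).nullMeasurableSet) hanti
      ⟨0, measure_ne_top μ _⟩
  obtain ⟨n, hn⟩ := (hlim.eventually (gt_mem_nhds (ENNReal.ofReal_pos.2 hβ))).exists
  refine ⟨-n, fun u hu => ?_⟩
  by_contra! hun
  exact (hu.trans (measure_mono fun ω (hω : V ω ≤ u) => hω.trans hun.le)).not_gt hn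

lemma measure_lt_rvQuantile_le [IsFiniteMeasure μ] (hV : Measurable V) (hβ : 0 < β) :
    μ {ω | V ω < rvQuantile μ V β} ≤ ENNReal.ofReal β := by
  set q := rvQuantile μ V β
  have hunion : {ω | V ω < q} = ⋃ n : ℕ, {ω | V ω ≤ q - 1 / (n + 1)} := by
    have := iUnion_Iic_eq_Iio_of_lt_of_tendsto (F := atTop)
      (fun n : ℕ => sub_lt_self q Nat.one_div_pos_of_nat)
      (by simpa using tendsto_one_div_add_atTop_nhds_zero_nat.const_sub q)
    ext ω
    simpa using congrArg (V ω ∈ ·) this.symm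
  have hmono : Monotone fun n : ℕ => {ω | V ω ≤ q - 1 / (n + 1)} := fun m n hmn ω hω => by
    simp only [Set.mem_ofPred_eq] at hω ⊢
    have : 1 / ((n : ℝ) + 1) ≤ 1 / ((m : ℝ) + 1) := by gcongr
    linarith
  rw [hunion, hmono.measure_iUnion]
  refine iSup_le fun n => (not_le.1 fun h => ?_).le
  exact (sub_lt_self q Nat.one_div_pos_of_nat).not_ge
    (csInf_le (bddBelow_setOf_ofReal_le_measure_le hV hβ) h)

lemma one_sub_le_measureReal_rvQuantile_le [IsProbabilityMeasure μ] (hV : Measurable V)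
    (hβ : 0 < β) : 1 - β ≤ μ.real {ω | rvQuantile μ V β ≤ V ω} := by
  have hlt : μ.real {ω | V ω < rvQuantile μ V β} ≤ β :=
    ENNReal.toReal_le_of_le_ofReal hβ.le (measure_lt_rvQuantile_le hV hβ)
  have hcompl : {ω | rvQuantile μ V β ≤ V ω} = {ω | V ω < rvQuantile μ V β}ᶜ := by
    ext ω; simp
  rw [hcompl, measureReal_compl (measurableSet_lt hV measurable_const), probReal_univ]
  linarith

end Quantile

lemma sum_le_sum_posPart_sub_add_card_mul {ι : Type*} {S T : Finset ι} (hST : S ⊆ T)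
    (x : ι → ℝ) (q : ℝ) : ∑ t ∈ S, x t ≤ ∑ t ∈ T, (x t - q)⁺ + #S * q := calc
  ∑ t ∈ S, x t ≤ ∑ t ∈ S, ((x t - q)⁺ + q) :=
    sum_le_sum fun t _ => by linarith [le_posPart (x t - q)]
  _ = ∑ t ∈ S, (x t - q)⁺ + #S * q := by rw [sum_add_distrib, sum_const, nsmul_eq_mul]
  _ ≤ ∑ t ∈ T, (x t - q)⁺ + #S * q := by gcongr

noncomputable def topAverage (x : ℕ → ℝ) (d : ℝ) (n : ℕ) : ℝ :=
  sSup {v : ℝ | ∃ S : Finset ℕ, S ⊆ Finset.Icc 1 n ∧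
    (S.card : ℝ) ≤ d * n ∧ v = (1 / (n : ℝ)) * ∑ t ∈ S, x t}

section TopAverage

variable {x : ℕ → ℝ} {d : ℝ}

lemma topAverage_nonneg (hd : 0 ≤ d) (n : ℕ) : 0 ≤ topAverage x d n := by
  refine le_csSup ?_ ⟨∅, empty_subset _, by simpa using mul_nonneg hd n.cast_nonneg, by simp⟩
  refine ((((Icc 1 n).powerset.image fun S => (1 / (n : ℝ)) * ∑ t ∈ S, x t)).finite_toSet.subset
    ?_).bddAbove
  rintro v ⟨S, hS, -, rfl⟩
  exact mem_coe.2 (mem_image.2 ⟨S, mem_powerset.2 hS, rfl⟩)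

lemma topAverage_le {q : ℝ} (hq : 0 ≤ q) (hd : 0 ≤ d) (n : ℕ) :
    topAverage x d n ≤ (∑ t ∈ Icc 1 n, (x t - q)⁺) / n + d * q := by
  have hsum : 0 ≤ ∑ t ∈ Icc 1 n, (x t - q)⁺ := sum_nonneg fun t _ => posPart_nonneg _
  refine Real.sSup_le ?_ (by positivity)
  rintro v ⟨S, hS, hcard, rfl⟩
  have hcardq : #S * q / n ≤ d * q := by
    rcases n.eq_zero_or_pos with rfl | hn
    · simpa using mul_nonneg hd hq
    · rw [div_le_iff₀ (by positivity)]
      nlinarith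
  calc 1 / (n : ℝ) * ∑ t ∈ S, x t ≤ (∑ t ∈ Icc 1 n, (x t - q)⁺ + #S * q) / n := by
        rw [one_div_mul_eq_div]
        gcongr
        exact sum_le_sum_posPart_sub_add_card_mul hS x q
    _ ≤ (∑ t ∈ Icc 1 n, (x t - q)⁺) / n + d * q := by rw [add_div]; gcongr

end TopAverage

lemma limsup_le_add_mul_of_le_add_mul {u a d : ℕ → ℝ} {L δ q : ℝ} (hq : 0 ≤ q)
    (hu : ∀ n, 0 ≤ u n) (hd : ∀ n, d n ∈ Set.Icc (0 : ℝ) 1)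
    (hle : ∀ n, u n ≤ a n + d n * q) (ha : Tendsto a atTop (𝓝 L))
    (hdδ : limsup d atTop ≤ δ) : limsup u atTop ≤ L + δ * q := by
  have hdq : limsup (fun n => d n * q) atTop ≤ δ * q := by
    change limsup ((· * q) ∘ d) atTop ≤ δ * q
    rw [← (monotone_mul_right_of_nonneg hq).map_limsup_of_continuousAt d
      (continuous_mul_const q).continuousAt
      ⟨1, eventually_map.2 (Eventually.of_forall fun n => (hd n).2)⟩
      (isBoundedUnder_of_eventually_ge (Eventually.of_forall fun n => (hd n).1)).isCoboundedUnder_le]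
    exact mul_le_mul_of_nonneg_right hdδ hq
  have hbdd : IsBoundedUnder (· ≤ ·) atTop fun n => d n * q :=
    ⟨q, eventually_map.2 (Eventually.of_forall fun n => by
      simpa using mul_le_mul_of_nonneg_right (hd n).2 hq)⟩
  refine le_of_forall_pos_le_add fun ε hε => limsup_le_of_le
    (isBoundedUnder_of_eventually_ge (Eventually.of_forall hu)).isCoboundedUnder_le ?_
  filter_upwards [ha.eventually_le_const (by linarith : L < L + ε / 2),
    eventually_lt_of_limsup_lt (hdq.trans_lt (by linarith : δ * q < δ * q + ε / 2)) hbdd]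
    with n han hdn
  linarith [hle n]

section Expectation

variable {Ω : Type*} [MeasurableSpace Ω] {μ : Measure Ω}

lemma strong_law_ae_real_Icc (X : ℕ → Ω → ℝ) (hint : Integrable (X 1) μ)
    (hindep : Pairwise ((· ⟂ᵢ[μ] ·) on X)) (hident : ∀ i, IdentDistrib (X i) (X 1) μ μ) :
    ∀ᵐ ω ∂μ, Tendsto (fun n : ℕ => (∑ t ∈ Icc 1 n, X t ω) / n) atTop (𝓝 μ[X 1]) := by
  have := strong_law_ae_real (fun i => X (i + 1)) hint
    (fun i j hij => hindep (by simpa using hij)) fun i => hident (i + 1)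
  filter_upwards [this] with ω hω
  simpa [← Ico_add_one_right_eq_Icc, sum_Ico_eq_sum_range, add_comm] using hω

lemma integral_posPart_sub_add_mul_le [IsFiniteMeasure μ] {X : Ω → ℝ} (hX : Measurable X)
    (hint : Integrable X μ) {q δ : ℝ} (hq : 0 ≤ q) (hδ : δ ≤ μ.real {ω | q ≤ X ω}) :
    ∫ ω, (X ω - q)⁺ ∂μ + δ * q ≤ ∫ ω, Set.indicator {ω | q ≤ X ω} X ω ∂μ := by
  have hmeas : MeasurableSet {ω | q ≤ X ω} := measurableSet_le measurable_const hX
  have hpos : (fun ω => (X ω - q)⁺) =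
      fun ω => Set.indicator {ω | q ≤ X ω} X ω - Set.indicator {ω | q ≤ X ω} (fun _ => q) ω := by
    ext ω
    by_cases h : q ≤ X ω <;> simp [Set.indicator, h, posPart_eq_ite, sub_nonneg]
  rw [hpos, integral_sub (hint.indicator hmeas) ((integrable_const q).indicator hmeas),
    integral_indicator_const q hmeas, smul_eq_mul]
  nlinarith

end Expectation

theorem stmt7_general {Ω : Type*} [MeasurableSpace Ω] (μ : Measure Ω) [IsProbabilityMeasure μ]
    (V : ℕ → Ω → ℝ) (hmeas : ∀ t, Measurable (V t))
    (hindep : iIndepFun V μ)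
    (hident : ∀ t, IdentDistrib (V t) (V 1) μ μ)
    (hint : Integrable (V 1) μ)
    (hnonneg : ∀ t, ∀ᵐ ω ∂μ, 0 ≤ V t ω)
    (δ : ℝ) (hδ : δ ∈ Set.Ioo (0:ℝ) 1)
    (δseq : ℕ → Ω → ℝ)
    (hδ01 : ∀ n ω, δseq n ω ∈ Set.Icc (0:ℝ) 1)
    (hlimsup : ∀ᵐ ω ∂μ, limsup (fun n => δseq n ω) atTop ≤ δ) :
    ∀ᵐ ω ∂μ,
      limsup (fun n : ℕ => sSup {v : ℝ | ∃ S : Finset ℕ, S ⊆ Finset.Icc 1 n ∧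
          (S.card : ℝ) ≤ δseq n ω * n ∧ v = (1 / (n : ℝ)) * ∑ t ∈ S, V t ω}) atTop
        ≤ ∫ ω', Set.indicator {ω'' | rvQuantile μ (V 1) (1 - δ) ≤ V 1 ω''} (V 1) ω' ∂μ := by
  obtain ⟨hδ0, hδ1⟩ := hδ
  set q := rvQuantile μ (V 1) (1 - δ)
  have hq : 0 ≤ q := rvQuantile_nonneg (hnonneg 1) (by linarith)
  have htail : δ ≤ μ.real {ω | q ≤ V 1 ω} := by
    simpa using one_sub_le_measureReal_rvQuantile_le (hmeas 1) (by linarith : 0 < 1 - δ)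
  have hposPart : Measurable fun x : ℝ => (x - q)⁺ := by fun_prop
  have hslln := strong_law_ae_real_Icc (μ := μ) (fun t ω => (V t ω - q)⁺)
    ((hint.sub (integrable_const q)).pos_part)
    (fun i j hij => (hindep.indepFun hij).comp hposPart hposPart)
    fun t => (hident t).comp hposPart
  filter_upwards [hslln, hlimsup] with ω hω hδω
  calc limsup (fun n => topAverage (V · ω) (δseq n ω) n) atTop
      ≤ ∫ ω', (V 1 ω' - q)⁺ ∂μ + δ * q :=
        limsup_le_add_mul_of_le_add_mul hq (fun n => topAverage_nonneg (hδ01 n ω).1 n)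
          (hδ01 · ω) (fun n => topAverage_le hq (hδ01 n ω).1 n) hω hδω
    _ ≤ _ := integral_posPart_sub_add_mul_le (hmeas 1) hint hq htail

/-- Let `(V_t)` be i.i.d. integrable non-negative real random variables,
`δ ∈ (0,1)`, and `(δ_n)` a non-increasing sequence of `[0,1]`-valued random variables with
`limsup δ_n ≤ δ` a.s. Then, almost surely,
`limsup_n sup{ (1/n) ∑_{t∈S} V_t : S ⊆ {1,…,n}, |S| ≤ δ_n n } ≤ E[V₁ 1_{V₁ ≥ q_V(1−δ)}]`. -/
theorem stmt7 {Ω : Type*} [MeasurableSpace Ω] (μ : Measure Ω) [IsProbabilityMeasure μ]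
    (V : ℕ → Ω → ℝ) (hmeas : ∀ t, Measurable (V t))
    (hindep : iIndepFun V μ)
    (hident : ∀ t, IdentDistrib (V t) (V 1) μ μ)
    (hint : Integrable (V 1) μ)
    (hnonneg : ∀ t, ∀ᵐ ω ∂μ, 0 ≤ V t ω)
    (δ : ℝ) (hδ : δ ∈ Set.Ioo (0:ℝ) 1)
    (δseq : ℕ → Ω → ℝ) (hδmeas : ∀ n, Measurable (δseq n))
    (hδ01 : ∀ n ω, δseq n ω ∈ Set.Icc (0:ℝ) 1)
    (hδanti : ∀ ω, Antitone fun n => δseq n ω)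
    (hlimsup : ∀ᵐ ω ∂μ, limsup (fun n => δseq n ω) atTop ≤ δ) :
    ∀ᵐ ω ∂μ,
      limsup (fun n : ℕ => sSup {v : ℝ | ∃ S : Finset ℕ, S ⊆ Finset.Icc 1 n ∧
          (S.card : ℝ) ≤ δseq n ω * n ∧ v = (1 / (n : ℝ)) * ∑ t ∈ S, V t ω}) atTop
        ≤ ∫ ω', Set.indicator {ω'' | rvQuantile μ (V 1) (1 - δ) ≤ V 1 ω''} (V 1) ω' ∂μ :=
  stmt7_general μ V hmeas hindep hident hint hnonneg δ hδ δseq hδ01 hlimsup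
end

section
/- Fix an integer K ≥ 2 and σ₋ ∈ (0, 1/2); set ρ = 1 − σ₋/(1−σ₋) and C = 2/(ρ(1−ρ)³). Let Q : {1,…,K} × {1,…,K} → ℝ be a stochastic matrix (each row sums to 1) with Q(i,j) ≥ σ₋ for all i,j. Fix an integer t ≥ 1, a state x̄ ∈ {1,…,K}, and positive weights w_s : {1,…,K} → (0,∞) for s = 0,1,…,t. For a probability vector μ on {1,…,K}, define Num(μ) = ∑ μ(x₀) · ∏_{s=1}^{t} Q(x_{s−1}, x_s) · ∏_{s=0}^{t} w_s(x_s) and Den(μ) = ∑ μ(x₀) · ∏_{s=1}^{t} Q(x_{s−1}, x_s) · ∏_{s=0}^{t−1} w_s(x_s), where both sums range over sequences (x₀,…,x_t) ∈ {1,…,K}^{t+1} with x_t ≠ x̄. Then, for any two probability vectors μ and ν on {1,…,K}, | log(Num(μ)/Den(μ)) − log(Num(ν)/Den(ν)) | ≤ C · ρ^t. -/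
/-!
Write `Num m = ∑ x, m x * F x` and `Den m = ∑ x, m x * G x`, where `F` and `G` are obtained from
the terminal vectors `1_{≠x̄} w_t` and `1_{≠x̄}` by `t` backward steps `f ↦ w_s · (Q f)`. For a
probability vector `m` the ratio `Num m / Den m` is an average of the ratios `F x / G x`, so it
suffices to show that `F / G` ranges over an interval `[a, b]` with `(b - a) / a` small, since
`log` is `1/a`-Lipschitz on `[a, ∞)`.

After the first backward step the ratio lies in `[σ S, S]`, `S` being the total terminal weight.
Every further step contracts the ratio range by the factor `ρ`: splitting a row as
`Q x = σ 𝟙 + (Q x - σ)`, the new ratio at `x` is a mediant of the common value `∑ f / ∑ g` and a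
value in the old range, and the latter carries weight at most `ρ` because `Q x - σ ≤ 1 - 2σ`.
Hence `(b - a) / a ≤ ρ ^ (t - 1) (1 - σ) / σ = ρ ^ (t - 1) / (1 - ρ) ≤ C ρ ^ t`.
-/

open Finset

/-- `(A + U) / (B + V)` averages `A / B` and `U / V`, the latter with weight `V / (B + V) ≤ ρ`. -/
theorem add_div_add_mem_Icc {ρ a b A B U V : ℝ} (hB : 0 < B) (hV : 0 ≤ V)
    (hVB : (1 - ρ) * V ≤ ρ * B) (hA : a * B ≤ A ∧ A ≤ b * B) (hU : a * V ≤ U ∧ U ≤ b * V) :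
    (A + U) / (B + V) ∈ Set.Icc ((1 - ρ) * (A / B) + ρ * a) ((1 - ρ) * (A / B) + ρ * b) := by
  set r := A / B
  have hAr : A = r * B := (div_mul_cancel₀ A hB.ne').symm
  have har : 0 ≤ r - a := sub_nonneg.2 ((le_div_iff₀ hB).2 hA.1)
  have hrb : 0 ≤ b - r := sub_nonneg.2 ((div_le_iff₀ hB).2 hA.2)
  have hBV : 0 < B + V := by linarith
  rw [Set.mem_Icc, le_div_iff₀ hBV, div_le_iff₀ hBV, hAr]
  constructor
  · nlinarith [mul_nonneg har (sub_nonneg.2 hVB)]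
  · nlinarith [mul_nonneg hrb (sub_nonneg.2 hVB)]

theorem abs_log_sub_log_le_of_mem_Icc {a b x y : ℝ} (ha : 0 < a) (hx : x ∈ Set.Icc a b)
    (hy : y ∈ Set.Icc a b) :
    |Real.log x - Real.log y| ≤ (b - a) / a := by
  have key : ∀ {u v}, u ∈ Set.Icc a b → v ∈ Set.Icc a b →
      Real.log u - Real.log v ≤ (b - a) / a := by
    intro u v hu hv
    have hb : 0 < b := ha.trans_le (hu.1.trans hu.2)
    calc Real.log u - Real.log v ≤ Real.log b - Real.log a :=
          sub_le_sub (Real.log_le_log (ha.trans_le hu.1) hu.2) (Real.log_le_log ha hv.1)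
      _ = Real.log (b / a) := (Real.log_div hb.ne' ha.ne').symm
      _ ≤ b / a - 1 := Real.log_le_sub_one_of_pos (div_pos hb ha)
      _ = (b - a) / a := by field_simp
  exact abs_sub_le_iff.2 ⟨key hx hy, key hy hx⟩

theorem pow_div_one_sub_le {ρ : ℝ} (hρ : 0 < ρ) (hρ1 : ρ < 1) (n : ℕ) :
    ρ ^ n / (1 - ρ) ≤ 2 / (ρ * (1 - ρ) ^ 3) * ρ ^ (n + 1) := by
  have h1ρ : 0 < 1 - ρ := sub_pos.2 hρ1
  rw [div_mul_eq_mul_div, div_le_div_iff₀ h1ρ (by positivity)]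
  have h2 : (1 - ρ) ^ 2 ≤ 2 := by nlinarith
  calc ρ ^ n * (ρ * (1 - ρ) ^ 3) = ρ ^ (n + 1) * (1 - ρ) * (1 - ρ) ^ 2 := by ring
    _ ≤ ρ ^ (n + 1) * (1 - ρ) * 2 := mul_le_mul_of_nonneg_left h2 (by positivity)
    _ = 2 * ρ ^ (n + 1) * (1 - ρ) := by ring

namespace HiddenMarkov

noncomputable def forgetRate (σ : ℝ) : ℝ := 1 - σ / (1 - σ)

theorem one_sub_forgetRate (σ : ℝ) : 1 - forgetRate σ = σ / (1 - σ) := by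
  rw [forgetRate, sub_sub_cancel]

theorem forgetRate_pos {σ : ℝ} (hσ : σ < 1 / 2) : 0 < forgetRate σ := by
  rw [forgetRate, sub_pos, div_lt_one (by linarith)]
  linarith

theorem forgetRate_lt_one {σ : ℝ} (hσ : 0 < σ) (hσ1 : σ < 1) : forgetRate σ < 1 := by
  rw [← sub_pos, one_sub_forgetRate]
  exact div_pos hσ (by linarith)

variable {ι : Type*} [Fintype ι]

theorem le_one_sub_of_sum_eq_one [Nontrivial ι] {σ : ℝ} (hσ : 0 ≤ σ) {q : ι → ℝ}
    (hq : ∀ y, σ ≤ q y) (hq1 : ∑ y, q y = 1) (x : ι) : q x ≤ 1 - σ := by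
  obtain ⟨y, hyx⟩ := exists_ne x
  have := add_le_sum (fun z _ => hσ.trans (hq z)) (mem_univ x) (mem_univ y) hyx.symm
  linarith [hq y]

theorem mul_sum_le_sum_mul {σ : ℝ} {q g : ι → ℝ} (hq : ∀ y, σ ≤ q y) (hg : ∀ y, 0 ≤ g y) :
    σ * ∑ y, g y ≤ ∑ y, q y * g y := by
  rw [mul_sum]
  exact sum_le_sum fun y _ => mul_le_mul_of_nonneg_right (hq y) (hg y)

def transfer (Q : ι → ι → ℝ) (c f : ι → ℝ) : ι → ℝ := fun x => c x * ∑ y, Q x y * f y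

def backward (Q : ι → ι → ℝ) : (n : ℕ) → (Fin n → ι → ℝ) → (ι → ℝ) → ι → ℝ
  | 0, _, v => v
  | n + 1, c, v => backward Q n (fun s => c s.castSucc) (transfer Q (c (Fin.last n)) v)

theorem sum_path_eq_sum_backward (Q : ι → ι → ℝ) (m : ι → ℝ) :
    ∀ (n : ℕ) (c : Fin n → ι → ℝ) (v : ι → ℝ),
      ∑ x : Fin (n + 1) → ι, m (x 0) * (∏ s : Fin n, Q (x s.castSucc) (x s.succ)) *
        ((∏ s : Fin n, c s (x s.castSucc)) * v (x (Fin.last n)))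
      = ∑ x, m x * backward Q n c v x
  | 0, c, v => by
    rw [← (Equiv.funUnique (Fin 1) ι).symm.sum_comp]
    simp [backward]
  | n + 1, c, v => by
    rw [backward, ← sum_path_eq_sum_backward Q m n, ← (Fin.snocEquiv fun _ => ι).sum_comp,
      Fintype.sum_prod_type_right]
    refine sum_congr rfl fun x _ => ?_
    simp only [Fin.snocEquiv_apply, Fin.prod_univ_castSucc, Fin.snoc_castSucc, Fin.snoc_last,
      Fin.succ_castSucc, Fin.succ_last, transfer, mul_sum]
    refine sum_congr rfl fun y _ => ?_
    rw [show (0 : Fin (n + 2)) = (0 : Fin (n + 1)).castSucc from rfl, Fin.snoc_castSucc]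
    ring

def RatioBetween (a b : ℝ) (f g : ι → ℝ) : Prop :=
  ∀ x, a * g x ≤ f x ∧ f x ≤ b * g x

theorem RatioBetween.sum_mul {a b : ℝ} {f g : ι → ℝ} (h : RatioBetween a b f g) {m : ι → ℝ}
    (hm : ∀ x, 0 ≤ m x) :
    a * ∑ x, m x * g x ≤ ∑ x, m x * f x ∧ ∑ x, m x * f x ≤ b * ∑ x, m x * g x := by
  rw [mul_sum, mul_sum]
  exact ⟨sum_le_sum fun x _ => by
      rw [mul_left_comm]; exact mul_le_mul_of_nonneg_left (h x).1 (hm x),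
    sum_le_sum fun x _ => by
      rw [mul_left_comm b]; exact mul_le_mul_of_nonneg_left (h x).2 (hm x)⟩

theorem RatioBetween.sum_mul_div_sum_mul_mem_Icc {a b : ℝ} {f g m : ι → ℝ}
    (h : RatioBetween a b f g) (hg : ∀ x, 0 < g x) (hm : ∀ x, 0 ≤ m x) (hm1 : ∑ x, m x = 1) :
    (∑ x, m x * f x) / (∑ x, m x * g x) ∈ Set.Icc a b := by
  obtain ⟨x, -, hx⟩ := exists_lt_of_sum_lt (s := univ) (f := 0) (g := m) (by simp [hm1])
  have hmg : 0 < ∑ x, m x * g x :=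
    sum_pos' (fun x _ => mul_nonneg (hm x) (hg x).le) ⟨x, mem_univ x, mul_pos hx (hg x)⟩
  obtain ⟨hlow, hupp⟩ := h.sum_mul hm
  exact ⟨(le_div_iff₀ hmg).2 hlow, (div_le_iff₀ hmg).2 hupp⟩

theorem RatioBetween.abs_log_sub_log_le {a b : ℝ} {f g : ι → ℝ} (h : RatioBetween a b f g)
    (ha : 0 < a) (hg : ∀ x, 0 < g x) {μ ν : ι → ℝ} (hμ : ∀ x, 0 ≤ μ x) (hμ1 : ∑ x, μ x = 1)
    (hν : ∀ x, 0 ≤ ν x) (hν1 : ∑ x, ν x = 1) :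
    |Real.log ((∑ x, μ x * f x) / ∑ x, μ x * g x) - Real.log ((∑ x, ν x * f x) / ∑ x, ν x * g x)|
      ≤ (b - a) / a :=
  abs_log_sub_log_le_of_mem_Icc ha (h.sum_mul_div_sum_mul_mem_Icc hg hμ hμ1)
    (h.sum_mul_div_sum_mul_mem_Icc hg hν hν1)

theorem RatioBetween.row_ratio_mem_Icc {σ a b : ℝ} {f g q : ι → ℝ}
    (h : RatioBetween a b f g) (hσ : 0 < σ) (hσ1 : σ < 1) (hq : ∀ y, σ ≤ q y ∧ q y ≤ 1 - σ)
    (hg : ∀ y, 0 ≤ g y) (hg' : 0 < ∑ y, g y) :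
    (∑ y, q y * f y) / (∑ y, q y * g y) ∈
      Set.Icc ((1 - forgetRate σ) * ((∑ y, f y) / ∑ y, g y) + forgetRate σ * a)
        ((1 - forgetRate σ) * ((∑ y, f y) / ∑ y, g y) + forgetRate σ * b) := by
  have hsplit : ∀ h : ι → ℝ, ∑ y, q y * h y = σ * ∑ y, h y + ∑ y, (q y - σ) * h y := by
    intro h
    rw [mul_sum, ← sum_add_distrib]
    exact sum_congr rfl fun y _ => by ring
  have hexcess : ∑ y, (q y - σ) * g y ≤ (1 - 2 * σ) * ∑ y, g y := by
    rw [mul_sum]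
    exact sum_le_sum fun y _ => mul_le_mul_of_nonneg_right (by linarith [(hq y).2]) (hg y)
  have hmean := h.sum_mul fun _ => hσ.le
  rw [← mul_sum, ← mul_sum] at hmean
  rw [hsplit f, hsplit g, ← mul_div_mul_left _ _ hσ.ne']
  refine add_div_add_mem_Icc (mul_pos hσ hg') (sum_nonneg fun y _ => ?_) ?_ hmean
    (h.sum_mul fun y => sub_nonneg.2 (hq y).1)
  · exact mul_nonneg (sub_nonneg.2 (hq y).1) (hg y)
  · have h1σ : 0 < 1 - σ := by linarith
    calc (1 - forgetRate σ) * ∑ y, (q y - σ) * g y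
        ≤ σ / (1 - σ) * ((1 - 2 * σ) * ∑ y, g y) := by
          rw [one_sub_forgetRate]; exact mul_le_mul_of_nonneg_left hexcess (by positivity)
      _ = forgetRate σ * (σ * ∑ y, g y) := by
          rw [forgetRate]; field_simp; ring

theorem transfer_pos {σ : ℝ} (hσ : 0 < σ) {Q : ι → ι → ℝ} (hQ : ∀ x y, σ ≤ Q x y) {c g : ι → ℝ}
    (hc : ∀ x, 0 < c x) (hg : ∀ y, 0 ≤ g y) (hg' : 0 < ∑ y, g y) (x : ι) :
    0 < transfer Q c g x :=
  mul_pos (hc x) ((mul_pos hσ hg').trans_le (mul_sum_le_sum_mul (hQ x) hg))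

theorem RatioBetween.transfer_of_le_one {σ : ℝ} (hσ : 0 < σ) {Q : ι → ι → ℝ}
    (hQ : ∀ x y, σ ≤ Q x y) (hQrow : ∀ x, ∑ y, Q x y = 1) {c f g : ι → ℝ} (hc : ∀ x, 0 ≤ c x)
    (h : RatioBetween 0 (∑ y, f y) f g) (hg : ∀ y, g y ≤ 1) :
    RatioBetween (σ * ∑ y, f y) (∑ y, f y) (transfer Q c f) (transfer Q c g) := by
  intro x
  have hf : ∀ y, 0 ≤ f y := fun y => by simpa using (h y).1
  have hQg : ∑ y, Q x y * g y ≤ 1 := hQrow x ▸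
    sum_le_sum fun y _ => mul_le_of_le_one_right (hσ.le.trans (hQ x y)) (hg y)
  have hlow : σ * (∑ y, f y) * ∑ y, Q x y * g y ≤ ∑ y, Q x y * f y :=
    calc σ * (∑ y, f y) * ∑ y, Q x y * g y ≤ σ * ∑ y, f y :=
          mul_le_of_le_one_right (mul_nonneg hσ.le (sum_nonneg fun y _ => hf y)) hQg
      _ ≤ ∑ y, Q x y * f y := mul_sum_le_sum_mul (hQ x) hf
  have hupp := (h.sum_mul fun y => hσ.le.trans (hQ x y)).2
  simp only [transfer, mul_left_comm _ (c x)]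
  exact ⟨mul_le_mul_of_nonneg_left hlow (hc x), mul_le_mul_of_nonneg_left hupp (hc x)⟩

theorem RatioBetween.transfer_contract {σ : ℝ} (hσ : 0 < σ) (hσ1 : σ < 1) {Q : ι → ι → ℝ}
    (hQ : ∀ x y, σ ≤ Q x y ∧ Q x y ≤ 1 - σ) {c f g : ι → ℝ} (hc : ∀ x, 0 ≤ c x) {a b : ℝ}
    (h : RatioBetween a b f g) (hg : ∀ y, 0 ≤ g y) (hg' : 0 < ∑ y, g y) :
    ∃ a' b', a ≤ a' ∧ b' - a' ≤ forgetRate σ * (b - a) ∧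
      RatioBetween a' b' (transfer Q c f) (transfer Q c g) := by
  set r := (∑ y, f y) / ∑ y, g y
  have har : a ≤ r := by
    have hmean := h.sum_mul fun _ => zero_le_one
    simp only [one_mul] at hmean
    exact (le_div_iff₀ hg').2 hmean.1
  refine ⟨(1 - forgetRate σ) * r + forgetRate σ * a, (1 - forgetRate σ) * r + forgetRate σ * b,
    ?_, by linarith, fun x => ?_⟩
  · have : 0 ≤ 1 - forgetRate σ := sub_nonneg.2 (forgetRate_lt_one hσ hσ1).le
    nlinarith
  · have hQg : 0 < ∑ y, Q x y * g y :=
      (mul_pos hσ hg').trans_le (mul_sum_le_sum_mul (fun y => (hQ x y).1) hg)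
    obtain ⟨hlow, hupp⟩ := h.row_ratio_mem_Icc hσ hσ1 (hQ x) hg hg'
    simp only [transfer, mul_left_comm _ (c x)]
    exact ⟨mul_le_mul_of_nonneg_left ((le_div_iff₀ hQg).1 hlow) (hc x),
      mul_le_mul_of_nonneg_left ((div_le_iff₀ hQg).1 hupp) (hc x)⟩

theorem RatioBetween.backward_contract [Nonempty ι] {σ : ℝ} (hσ : 0 < σ) (hσ2 : σ < 1 / 2)
    {Q : ι → ι → ℝ} (hQ : ∀ x y, σ ≤ Q x y ∧ Q x y ≤ 1 - σ) :
    ∀ (n : ℕ) (c : Fin n → ι → ℝ), (∀ s x, 0 < c s x) → ∀ {a b : ℝ} {f g : ι → ℝ},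
      RatioBetween a b f g → (∀ y, 0 < g y) →
      (∀ x, 0 < backward Q n c g x) ∧ ∃ a' b', a ≤ a' ∧ b' - a' ≤ forgetRate σ ^ n * (b - a) ∧
        RatioBetween a' b' (backward Q n c f) (backward Q n c g)
  | 0, _, _, a, b, _, _, h, hg => ⟨hg, a, b, le_rfl, by simp, h⟩
  | n + 1, c, hc, a, b, f, g, h, hg => by
    have hg' : 0 < ∑ y, g y := sum_pos (fun y _ => hg y) univ_nonempty
    obtain ⟨a₁, b₁, ha₁, hab₁, h₁⟩ :=
      h.transfer_contract hσ (by linarith) hQ (fun x => (hc (Fin.last n) x).le)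
        (fun y => (hg y).le) hg'
    obtain ⟨hpos, a₂, b₂, ha₂, hab₂, h₂⟩ :=
      h₁.backward_contract hσ hσ2 hQ n _ (fun s => hc s.castSucc)
      (transfer_pos hσ (fun x y => (hQ x y).1) (hc (Fin.last n)) (fun y => (hg y).le) hg')
    refine ⟨hpos, a₂, b₂, ha₁.trans ha₂, hab₂.trans ?_, h₂⟩
    rw [pow_succ, mul_assoc]
    exact mul_le_mul_of_nonneg_left hab₁ (pow_nonneg (forgetRate_pos hσ2).le n)

theorem ratioBetween_indicator {s : Set ι} {v : ι → ℝ} (hv : ∀ y, 0 ≤ v y) :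
    RatioBetween 0 (∑ y, s.indicator v y) (s.indicator v) (s.indicator 1) := fun y => by
  have hv' : ∀ y, 0 ≤ s.indicator v y := Set.indicator_nonneg fun y _ => hv y
  refine ⟨by simpa using hv' y, ?_⟩
  by_cases hy : y ∈ s
  · rw [Set.indicator_of_mem hy 1, Pi.one_apply, mul_one]
    exact single_le_sum (fun y _ => hv' y) (mem_univ y)
  · simp [hy]

theorem exists_ratioBetween_backward_indicator {σ : ℝ} (hσ : 0 < σ) (hσ2 : σ < 1 / 2)
    {Q : ι → ι → ℝ} (hQ : ∀ x y, σ ≤ Q x y ∧ Q x y ≤ 1 - σ) (hQrow : ∀ x, ∑ y, Q x y = 1)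
    {n : ℕ} {c : Fin (n + 1) → ι → ℝ} (hc : ∀ s x, 0 < c s x) {v : ι → ℝ} (hv : ∀ y, 0 < v y)
    {s : Set ι} (hs : s.Nonempty) :
    (∀ x, 0 < backward Q (n + 1) c (s.indicator 1) x) ∧
      ∃ a b, 0 < a ∧ (b - a) / a ≤ forgetRate σ ^ n / (1 - forgetRate σ) ∧
        RatioBetween a b (backward Q (n + 1) c (s.indicator v))
          (backward Q (n + 1) c (s.indicator 1)) := by
  obtain ⟨y₀, hy₀⟩ := hs
  have : Nonempty ι := ⟨y₀⟩
  have hv' : ∀ y, 0 ≤ s.indicator v y := Set.indicator_nonneg fun y _ => (hv y).le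
  have h1 : ∀ y, 0 ≤ s.indicator (1 : ι → ℝ) y := Set.indicator_nonneg fun _ _ => zero_le_one
  have hS : 0 < ∑ y, s.indicator v y :=
    sum_pos' (fun y _ => hv' y) ⟨y₀, mem_univ _, by simpa [hy₀] using hv y₀⟩
  have hS1 : 0 < ∑ y, s.indicator (1 : ι → ℝ) y :=
    sum_pos' (fun y _ => h1 y) ⟨y₀, mem_univ _, by simp [hy₀]⟩
  have hσS : 0 < σ * ∑ y, s.indicator v y := mul_pos hσ hS
  obtain ⟨hG, a, b, ha, hab, hF⟩ :=
    ((ratioBetween_indicator fun y => (hv y).le).transfer_of_le_one hσ (fun x y => (hQ x y).1)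
      hQrow (fun x => (hc _ x).le) fun y => Set.indicator_apply_le' (fun _ => le_rfl)
        fun _ => zero_le_one).backward_contract hσ hσ2 hQ n _ (fun s x => hc _ x)
      (transfer_pos hσ (fun x y => (hQ x y).1) (hc _) h1 hS1)
  refine ⟨hG, a, b, hσS.trans_le ha, ?_, hF⟩
  calc (b - a) / a
      ≤ forgetRate σ ^ n * (∑ y, s.indicator v y - σ * ∑ y, s.indicator v y) /
          (σ * ∑ y, s.indicator v y) :=
        div_le_div₀ (mul_nonneg (pow_nonneg (forgetRate_pos hσ2).le n) (by nlinarith)) hab hσS ha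
    _ = forgetRate σ ^ n / (1 - forgetRate σ) := by
        rw [one_sub_forgetRate]
        field_simp

end HiddenMarkov

open HiddenMarkov

/-- the forgetting lemma. With `K ≥ 2`, `σ₋ ∈ (0,1/2)`, `ρ = 1 − σ₋/(1−σ₋)`,
`C = 2/(ρ(1−ρ)³)`, a stochastic matrix `Q` with entries `≥ σ₋`, `t ≥ 1`, a state `x̄`,
positive weights `w_s` for `s = 0,…,t`, and
`Num(μ) = ∑ μ(x₀) ∏_{s=1}^t Q(x_{s−1},x_s) ∏_{s=0}^t w_s(x_s)`,
`Den(μ) = ∑ μ(x₀) ∏_{s=1}^t Q(x_{s−1},x_s) ∏_{s=0}^{t−1} w_s(x_s)`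
(sums over `(x₀,…,x_t)` with `x_t ≠ x̄`), one has, for all probability vectors `μ, ν`,
`|log(Num(μ)/Den(μ)) − log(Num(ν)/Den(ν))| ≤ C ρ^t`. -/
theorem stmt8 (K : ℕ) (hK : 2 ≤ K) (σ : ℝ) (hσ0 : 0 < σ) (hσhalf : σ < 1 / 2)
    (Q : Fin K → Fin K → ℝ) (hQrow : ∀ i, ∑ j, Q i j = 1) (hQlb : ∀ i j, σ ≤ Q i j)
    (t : ℕ) (ht : 1 ≤ t) (xbar : Fin K)
    (w : Fin (t + 1) → Fin K → ℝ) (hw : ∀ s x, 0 < w s x)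
    (μ ν : Fin K → ℝ) (hμ0 : ∀ x, 0 ≤ μ x) (hμ1 : ∑ x, μ x = 1)
    (hν0 : ∀ x, 0 ≤ ν x) (hν1 : ∑ x, ν x = 1) :
    let ρ : ℝ := 1 - σ / (1 - σ)
    let C : ℝ := 2 / (ρ * (1 - ρ) ^ 3)
    let Num : (Fin K → ℝ) → ℝ := fun m => ∑ x : Fin (t + 1) → Fin K,
      if x (Fin.last t) ≠ xbar then
        m (x 0) * (∏ s : Fin t, Q (x s.castSucc) (x s.succ)) * ∏ s : Fin (t + 1), w s (x s)
      else 0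
    let Den : (Fin K → ℝ) → ℝ := fun m => ∑ x : Fin (t + 1) → Fin K,
      if x (Fin.last t) ≠ xbar then
        m (x 0) * (∏ s : Fin t, Q (x s.castSucc) (x s.succ)) *
          ∏ s : Fin t, w s.castSucc (x s.castSucc)
      else 0
    |Real.log (Num μ / Den μ) - Real.log (Num ν / Den ν)| ≤ C * ρ ^ t := by
  intro ρ C Num Den
  have : Nontrivial (Fin K) := Fin.nontrivial_iff_two_le.2 hK
  have hNum : ∀ m, Num m = ∑ x, m x * backward Q t (fun s => w s.castSucc)
      (({xbar}ᶜ : Set (Fin K)).indicator (w (Fin.last t))) x := fun m => by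
    rw [← sum_path_eq_sum_backward]
    refine sum_congr rfl fun x _ => ?_
    simp only [Set.indicator_apply, Set.mem_compl_singleton_iff, Fin.prod_univ_castSucc, mul_ite,
      mul_zero]
  have hDen : ∀ m, Den m = ∑ x, m x *
      backward Q t (fun s => w s.castSucc) (({xbar}ᶜ : Set (Fin K)).indicator 1) x := fun m => by
    rw [← sum_path_eq_sum_backward]
    refine sum_congr rfl fun x _ => ?_
    simp only [Set.indicator_apply, Set.mem_compl_singleton_iff, Pi.one_apply, mul_ite, mul_zero,
      mul_one]
  obtain ⟨n, rfl⟩ : ∃ n, t = n + 1 := ⟨t - 1, by omega⟩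
  have hQ : ∀ x y, σ ≤ Q x y ∧ Q x y ≤ 1 - σ := fun x y =>
    ⟨hQlb x y, le_one_sub_of_sum_eq_one hσ0.le (hQlb x) (hQrow x) y⟩
  obtain ⟨hG, a, b, ha, hab, hF⟩ := exists_ratioBetween_backward_indicator hσ0 hσhalf hQ hQrow
    (fun s => hw s.castSucc) (hw (Fin.last _)) (Set.nonempty_compl_of_nontrivial xbar)
  rw [hNum, hNum, hDen, hDen]
  calc _ ≤ (b - a) / a := hF.abs_log_sub_log_le ha hG hμ0 hμ1 hν0 hν1
    _ ≤ forgetRate σ ^ n / (1 - forgetRate σ) := hab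
    _ ≤ C * ρ ^ (n + 1) :=
        pow_div_one_sub_le (forgetRate_pos hσhalf) (forgetRate_lt_one hσ0 (by linarith)) n
end

section
/- Fix an integer K ≥ 2 and σ₋ ∈ (0, 1/2]. Let Q : {1,…,K} × {1,…,K} → ℝ be a stochastic matrix (each row sums to 1) with Q(i,j) ≥ σ₋ for all i,j (so that Q(i,j) ≤ 1−σ₋ for all i,j). Fix x̄ ∈ {1,…,K} and a nonnegative function g : {1,…,K} → [0,∞) with ∑_{x'≠x̄} g(x') > 0. For a probability vector φ on {1,…,K}, define A(φ) = ∑_{x'≠x̄} ∑_{x''} Q(x'',x') φ(x'') and B(φ) = ∑_{x'≠x̄} g(x') ∑_{x''} Q(x'',x') φ(x''). Then, for any two probability vectors φ and ψ on {1,…,K}, | log(B(φ)/A(φ)) − log(B(ψ)/A(ψ)) | ≤ 2·((1−σ₋)/σ₋)³ · ∑_{x''} |φ(x'') − ψ(x'')|. -/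
private lemma log_abs_sub_le (a b c : ℝ) (hc : 0 < c) (ha : c ≤ a) (hb : c ≤ b) :
    |Real.log a - Real.log b| ≤ |a - b| / c := by
  have key : ∀ x y : ℝ, c ≤ x → c ≤ y → Real.log x - Real.log y ≤ |x - y| / c := by
    intro x y hx hy
    have hx0 : 0 < x := lt_of_lt_of_le hc hx
    have hy0 : 0 < y := lt_of_lt_of_le hc hy
    have h0 : Real.log x - Real.log y = Real.log (x / y) :=
      (Real.log_div hx0.ne' hy0.ne').symm
    rw [h0]
    have h1 : Real.log (x / y) ≤ x / y - 1 :=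
      Real.log_le_sub_one_of_pos (div_pos hx0 hy0)
    have h2 : x / y - 1 = (x - y) / y := by field_simp
    have h3 : (x - y) / y ≤ |x - y| / c :=
      div_le_div₀ (abs_nonneg _) (le_abs_self _) hc hy
    linarith
  rw [abs_sub_le_iff]
  refine ⟨key a b ha hb, ?_⟩
  have := key b a hb ha
  rwa [abs_sub_comm] at this

/-- the key deterministic inequality of the forgetting lemma. -/
theorem stmt9 (K : ℕ) (hK : 2 ≤ K) (σ : ℝ) (hσ0 : 0 < σ) (hσhalf : σ ≤ 1 / 2)
    (Q : Fin K → Fin K → ℝ) (hQrow : ∀ i, ∑ j, Q i j = 1) (hQlb : ∀ i j, σ ≤ Q i j)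
    (xbar : Fin K) (g : Fin K → ℝ) (hg : ∀ x, 0 ≤ g x)
    (hgpos : 0 < ∑ x' ∈ Finset.univ.erase xbar, g x')
    (φ ψ : Fin K → ℝ) (hφ0 : ∀ x, 0 ≤ φ x) (hφ1 : ∑ x, φ x = 1)
    (hψ0 : ∀ x, 0 ≤ ψ x) (hψ1 : ∑ x, ψ x = 1) :
    let A : (Fin K → ℝ) → ℝ := fun p =>
      ∑ x' ∈ Finset.univ.erase xbar, ∑ x'', Q x'' x' * p x''
    let B : (Fin K → ℝ) → ℝ := fun p =>
      ∑ x' ∈ Finset.univ.erase xbar, g x' * ∑ x'', Q x'' x' * p x''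
    |Real.log (B φ / A φ) - Real.log (B ψ / A ψ)|
      ≤ 2 * ((1 - σ) / σ) ^ 3 * ∑ x'', |φ x'' - ψ x''| := by
  intro A B
  set S : Finset (Fin K) := Finset.univ.erase xbar with hS
  set Δ : ℝ := ∑ x'', |φ x'' - ψ x''| with hΔ
  have hΔ0 : 0 ≤ Δ := Finset.sum_nonneg fun _ _ => abs_nonneg _
  -- upper bound on Q entries
  have hQub : ∀ i j, Q i j ≤ 1 - σ := by
    intro i j
    have hcard : 1 ≤ (Finset.univ.erase j).card := by
      rw [Finset.card_erase_of_mem (Finset.mem_univ _), Finset.card_univ, Fintype.card_fin]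
      omega
    obtain ⟨k, hk⟩ := Finset.card_pos.mp (lt_of_lt_of_le one_pos hcard)
    have hsum : σ ≤ ∑ l ∈ Finset.univ.erase j, Q i l := by
      have := Finset.single_le_sum (f := fun l => Q i l)
        (fun l _ => le_trans hσ0.le (hQlb i l)) hk
      exact le_trans (hQlb i k) this
    have hsplit : Q i j + ∑ l ∈ Finset.univ.erase j, Q i l = 1 := by
      rw [Finset.add_sum_erase _ _ (Finset.mem_univ j)]
      exact hQrow i
    linarith
  -- bounds on m p x' := ∑ x'', Q x'' x' * p x''
  have mlb : ∀ (p : Fin K → ℝ), (∀ x, 0 ≤ p x) → (∑ x, p x = 1) →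
      ∀ x', σ ≤ ∑ x'', Q x'' x' * p x'' := by
    intro p hp0 hp1 x'
    calc σ = ∑ x'', σ * p x'' := by rw [← Finset.mul_sum, hp1, mul_one]
    _ ≤ ∑ x'', Q x'' x' * p x'' :=
      Finset.sum_le_sum fun x'' _ => mul_le_mul_of_nonneg_right (hQlb x'' x') (hp0 x'')
  have mub : ∀ (p : Fin K → ℝ), (∀ x, 0 ≤ p x) → (∑ x, p x = 1) →
      ∀ x', ∑ x'', Q x'' x' * p x'' ≤ 1 - σ := by
    intro p hp0 hp1 x'
    calc ∑ x'', Q x'' x' * p x'' ≤ ∑ x'', (1 - σ) * p x'' :=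
      Finset.sum_le_sum fun x'' _ => mul_le_mul_of_nonneg_right (hQub x'' x') (hp0 x'')
    _ = 1 - σ := by rw [← Finset.mul_sum, hp1, mul_one]
  -- difference of m's
  have mdiff : ∀ x', |(∑ x'', Q x'' x' * φ x'') - (∑ x'', Q x'' x' * ψ x'')|
      ≤ (1 - σ) * Δ := by
    intro x'
    have h1 : (∑ x'', Q x'' x' * φ x'') - (∑ x'', Q x'' x' * ψ x'')
        = ∑ x'', Q x'' x' * (φ x'' - ψ x'') := by
      rw [← Finset.sum_sub_distrib]
      exact Finset.sum_congr rfl fun x'' _ => (mul_sub _ _ _).symm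
    rw [h1]
    calc |∑ x'', Q x'' x' * (φ x'' - ψ x'')| ≤ ∑ x'', |Q x'' x' * (φ x'' - ψ x'')| :=
      Finset.abs_sum_le_sum_abs _ _
    _ ≤ ∑ x'', (1 - σ) * |φ x'' - ψ x''| := by
      refine Finset.sum_le_sum fun x'' _ => ?_
      rw [abs_mul, abs_of_nonneg (le_trans hσ0.le (hQlb x'' x'))]
      exact mul_le_mul_of_nonneg_right (hQub x'' x') (abs_nonneg _)
    _ = (1 - σ) * Δ := by rw [← Finset.mul_sum]
  set G : ℝ := ∑ x' ∈ S, g x' with hG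
  have hGpos : 0 < G := hgpos
  have hScard : 1 ≤ (S.card : ℝ) := by
    have : 1 ≤ S.card := by
      rw [hS, Finset.card_erase_of_mem (Finset.mem_univ _), Finset.card_univ,
        Fintype.card_fin]
      omega
    exact_mod_cast this
  -- lower bounds for A and B
  have hAlb : ∀ (p : Fin K → ℝ), (∀ x, 0 ≤ p x) → (∑ x, p x = 1) →
      (S.card : ℝ) * σ ≤ A p := by
    intro p hp0 hp1
    calc (S.card : ℝ) * σ = ∑ _x' ∈ S, σ := by rw [Finset.sum_const, nsmul_eq_mul]
    _ ≤ A p := Finset.sum_le_sum fun x' _ => mlb p hp0 hp1 x'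
  have hBlb : ∀ (p : Fin K → ℝ), (∀ x, 0 ≤ p x) → (∑ x, p x = 1) →
      G * σ ≤ B p := by
    intro p hp0 hp1
    calc G * σ = ∑ x' ∈ S, g x' * σ := by rw [hG, Finset.sum_mul]
    _ ≤ B p := Finset.sum_le_sum fun x' _ =>
        mul_le_mul_of_nonneg_left (mlb p hp0 hp1 x') (hg x')
  have hcσ : 0 < (S.card : ℝ) * σ := mul_pos (lt_of_lt_of_le one_pos hScard) hσ0
  have hGσ : 0 < G * σ := mul_pos hGpos hσ0
  have hAφ := hAlb φ hφ0 hφ1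
  have hAψ := hAlb ψ hψ0 hψ1
  have hBφ := hBlb φ hφ0 hφ1
  have hBψ := hBlb ψ hψ0 hψ1
  have hAφ0 : 0 < A φ := lt_of_lt_of_le hcσ hAφ
  have hAψ0 : 0 < A ψ := lt_of_lt_of_le hcσ hAψ
  have hBφ0 : 0 < B φ := lt_of_lt_of_le hGσ hBφ
  have hBψ0 : 0 < B ψ := lt_of_lt_of_le hGσ hBψ
  -- differences of A and B
  have hAdiff : |A φ - A ψ| ≤ (S.card : ℝ) * ((1 - σ) * Δ) := by
    have h1 : A φ - A ψ = ∑ x' ∈ S,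
        ((∑ x'', Q x'' x' * φ x'') - (∑ x'', Q x'' x' * ψ x'')) := by
      rw [← Finset.sum_sub_distrib]
    rw [h1]
    calc |∑ x' ∈ S, ((∑ x'', Q x'' x' * φ x'') - ∑ x'', Q x'' x' * ψ x'')|
        ≤ ∑ x' ∈ S, |(∑ x'', Q x'' x' * φ x'') - ∑ x'', Q x'' x' * ψ x''| :=
      Finset.abs_sum_le_sum_abs _ _
    _ ≤ ∑ _x' ∈ S, (1 - σ) * Δ := Finset.sum_le_sum fun x' _ => mdiff x'
    _ = (S.card : ℝ) * ((1 - σ) * Δ) := by rw [Finset.sum_const, nsmul_eq_mul]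
  have hBdiff : |B φ - B ψ| ≤ G * ((1 - σ) * Δ) := by
    have h1 : B φ - B ψ = ∑ x' ∈ S,
        g x' * ((∑ x'', Q x'' x' * φ x'') - (∑ x'', Q x'' x' * ψ x'')) := by
      rw [← Finset.sum_sub_distrib]
      exact Finset.sum_congr rfl fun x' _ => (mul_sub _ _ _).symm
    rw [h1]
    calc |∑ x' ∈ S, g x' * ((∑ x'', Q x'' x' * φ x'') - ∑ x'', Q x'' x' * ψ x'')|
        ≤ ∑ x' ∈ S, |g x' * ((∑ x'', Q x'' x' * φ x'') - ∑ x'', Q x'' x' * ψ x'')| :=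
      Finset.abs_sum_le_sum_abs _ _
    _ ≤ ∑ x' ∈ S, g x' * ((1 - σ) * Δ) := by
      refine Finset.sum_le_sum fun x' _ => ?_
      rw [abs_mul, abs_of_nonneg (hg x')]
      exact mul_le_mul_of_nonneg_left (mdiff x') (hg x')
    _ = G * ((1 - σ) * Δ) := by rw [hG, Finset.sum_mul]
  -- log bounds
  have hlogA : |Real.log (A φ) - Real.log (A ψ)| ≤ (1 - σ) / σ * Δ := by
    have := log_abs_sub_le (A φ) (A ψ) ((S.card : ℝ) * σ) hcσ hAφ hAψ
    refine le_trans this ?_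
    rw [div_le_iff₀ hcσ] at *
    calc |A φ - A ψ| ≤ (S.card : ℝ) * ((1 - σ) * Δ) := hAdiff
    _ = (1 - σ) / σ * Δ * ((S.card : ℝ) * σ) := by field_simp
  have hlogB : |Real.log (B φ) - Real.log (B ψ)| ≤ (1 - σ) / σ * Δ := by
    have := log_abs_sub_le (B φ) (B ψ) (G * σ) hGσ hBφ hBψ
    refine le_trans this ?_
    rw [div_le_iff₀ hGσ]
    calc |B φ - B ψ| ≤ G * ((1 - σ) * Δ) := hBdiff
    _ = (1 - σ) / σ * Δ * (G * σ) := by field_simp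
  -- combine
  have hsplit : Real.log (B φ / A φ) - Real.log (B ψ / A ψ)
      = (Real.log (B φ) - Real.log (B ψ)) - (Real.log (A φ) - Real.log (A ψ)) := by
    rw [Real.log_div hBφ0.ne' hAφ0.ne', Real.log_div hBψ0.ne' hAψ0.ne']
    ring
  rw [hsplit]
  have hmain : |(Real.log (B φ) - Real.log (B ψ)) - (Real.log (A φ) - Real.log (A ψ))|
      ≤ 2 * ((1 - σ) / σ) * Δ := by
    calc |(Real.log (B φ) - Real.log (B ψ)) - (Real.log (A φ) - Real.log (A ψ))|
        ≤ |Real.log (B φ) - Real.log (B ψ)| + |Real.log (A φ) - Real.log (A ψ)| :=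
      abs_sub _ _
    _ ≤ (1 - σ) / σ * Δ + (1 - σ) / σ * Δ := add_le_add hlogB hlogA
    _ = 2 * ((1 - σ) / σ) * Δ := by ring
  refine le_trans hmain ?_
  have hr1 : 1 ≤ (1 - σ) / σ := (le_div_iff₀ hσ0).mpr (by linarith)
  set r : ℝ := (1 - σ) / σ
  have hr3 : r ≤ r ^ 3 := by
    calc r = r ^ 1 := (pow_one r).symm
    _ ≤ r ^ 3 := pow_le_pow_right₀ hr1 (by norm_num)
  nlinarith
end
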